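/- arXiv:1507.00897 — 10 statements merged into one kernel-verified Lean document; each statement's English description precedes it below -/
import Mathlib

section
/- Let u : ℝ³ → ℝ be a smooth (C^∞) function of (t,x,y) satisfying the 3D rdDym equation u_ty = u_x·u_xy − u_y·u_xx everywhere, and let B : ℝ → ℝ be a smooth function. Then the function v(t,x,y) = B(y)·u_y satisfies the linearized equation v_ty − u_x·v_xy + u_y·v_xx − u_xy·v_x + u_xx·v_y = 0 everywhere. -/
noncomputable section

/-- Partial derivative with respect to the first coordinate `t`. -/
def pt (u : ℝ × ℝ × ℝ → ℝ) : ℝ × ℝ × ℝ → ℝ :=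
  fun p => deriv (fun s => u (s, p.2.1, p.2.2)) p.1

/-- Partial derivative with respect to the second coordinate `x`. -/
def px (u : ℝ × ℝ × ℝ → ℝ) : ℝ × ℝ × ℝ → ℝ :=
  fun p => deriv (fun s => u (p.1, s, p.2.2)) p.2.1

/-- Partial derivative with respect to the third coordinate `y`. -/
def py (u : ℝ × ℝ × ℝ → ℝ) : ℝ × ℝ × ℝ → ℝ :=
  fun p => deriv (fun s => u (p.1, p.2.1, s)) p.2.2

/-- The 3D rdDym equation `u_ty = u_x·u_xy − u_y·u_xx`. -/
def rdDym (u : ℝ × ℝ × ℝ → ℝ) : Prop :=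
  ∀ p, py (pt u) p = px u p * py (px u) p - py u p * px (px u) p

/-- The linearization `ℓ(v) = v_ty − u_x·v_xy + u_y·v_xx − u_xy·v_x + u_xx·v_y = 0`
of the rdDym equation along `u`. -/
def linearized (u v : ℝ × ℝ × ℝ → ℝ) : Prop :=
  ∀ p, py (pt v) p - px u p * py (px v) p + py u p * px (px v) p
      - py (px u) p * px v p + px (px u) p * py v p = 0

abbrev e1 : ℝ × ℝ × ℝ := (1, 0, 0)
abbrev e2 : ℝ × ℝ × ℝ := (0, 1, 0)
abbrev e3 : ℝ × ℝ × ℝ := (0, 0, 1)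

lemma slice1 (a b t : ℝ) : HasDerivAt (fun s : ℝ => ((s, a, b) : ℝ × ℝ × ℝ)) e1 t :=
  (hasDerivAt_id t).prodMk ((hasDerivAt_const t a).prodMk (hasDerivAt_const t b))
lemma slice2 (a b t : ℝ) : HasDerivAt (fun s : ℝ => ((a, s, b) : ℝ × ℝ × ℝ)) e2 t :=
  (hasDerivAt_const t a).prodMk ((hasDerivAt_id t).prodMk (hasDerivAt_const t b))
lemma slice3 (a b t : ℝ) : HasDerivAt (fun s : ℝ => ((a, b, s) : ℝ × ℝ × ℝ)) e3 t :=
  (hasDerivAt_const t a).prodMk ((hasDerivAt_const t b).prodMk (hasDerivAt_id t))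

variable {u : ℝ × ℝ × ℝ → ℝ}

lemma pt_apply (hu : Differentiable ℝ u) (p : ℝ × ℝ × ℝ) :
    pt u p = fderiv ℝ u p e1 := by
  have h := ((hu p).hasFDerivAt.comp_hasDerivAt p.1 (slice1 p.2.1 p.2.2 p.1))
  simpa [pt, Function.comp_def] using h.deriv

lemma px_apply (hu : Differentiable ℝ u) (p : ℝ × ℝ × ℝ) :
    px u p = fderiv ℝ u p e2 := by
  have h := ((hu p).hasFDerivAt.comp_hasDerivAt p.2.1 (slice2 p.1 p.2.2 p.2.1))
  simpa [px, Function.comp_def] using h.deriv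

lemma py_apply (hu : Differentiable ℝ u) (p : ℝ × ℝ × ℝ) :
    py u p = fderiv ℝ u p e3 := by
  have h := ((hu p).hasFDerivAt.comp_hasDerivAt p.2.2 (slice3 p.1 p.2.1 p.2.2))
  simpa [py, Function.comp_def] using h.deriv

lemma contDiff_pt (hu : ContDiff ℝ (⊤ : ℕ∞) u) : ContDiff ℝ (⊤ : ℕ∞) (pt u) := by
  have : pt u = fun p => fderiv ℝ u p e1 :=
    funext (pt_apply (hu.differentiable (by simp)))
  rw [this]
  exact (hu.fderiv_right (by simp)).clm_apply contDiff_const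

lemma contDiff_px (hu : ContDiff ℝ (⊤ : ℕ∞) u) : ContDiff ℝ (⊤ : ℕ∞) (px u) := by
  have : px u = fun p => fderiv ℝ u p e2 :=
    funext (px_apply (hu.differentiable (by simp)))
  rw [this]
  exact (hu.fderiv_right (by simp)).clm_apply contDiff_const

lemma contDiff_py (hu : ContDiff ℝ (⊤ : ℕ∞) u) : ContDiff ℝ (⊤ : ℕ∞) (py u) := by
  have : py u = fun p => fderiv ℝ u p e3 :=
    funext (py_apply (hu.differentiable (by simp)))
  rw [this]
  exact (hu.fderiv_right (by simp)).clm_apply contDiff_const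

lemma swap (hu : ContDiff ℝ (⊤ : ℕ∞) u) (v w : ℝ × ℝ × ℝ) (p : ℝ × ℝ × ℝ) :
    fderiv ℝ (fun q => fderiv ℝ u q w) p v
      = fderiv ℝ (fun q => fderiv ℝ u q v) p w := by
  have hF : ContDiff ℝ (⊤ : ℕ∞) (fderiv ℝ u) := hu.fderiv_right (by simp)
  have hFd : Differentiable ℝ (fderiv ℝ u) := hF.differentiable (by simp)
  have key : ∀ z : ℝ × ℝ × ℝ, fderiv ℝ (fun q => fderiv ℝ u q z) p
      = (fderiv ℝ (fderiv ℝ u) p).flip z := by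
    intro z
    have := fderiv_clm_apply (hFd p) (differentiableAt_const z)
    simpa using this
  rw [key w, key v]
  simp only [ContinuousLinearMap.flip_apply]
  exact second_derivative_symmetric
    (fun y => ((hu.differentiable (by simp)) y).hasFDerivAt)
    (hFd p).hasFDerivAt v w

lemma comm_ty (hu : ContDiff ℝ (⊤ : ℕ∞) u) : pt (py u) = py (pt u) := by
  funext q
  have hpy : py u = fun r => fderiv ℝ u r e3 :=
    funext (py_apply (hu.differentiable (by simp)))
  have hpt : pt u = fun r => fderiv ℝ u r e1 :=
    funext (pt_apply (hu.differentiable (by simp)))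
  rw [pt_apply ((contDiff_py hu).differentiable (by simp)) q,
    py_apply ((contDiff_pt hu).differentiable (by simp)) q, hpy, hpt]
  exact swap hu e1 e3 q

lemma comm_xy (hu : ContDiff ℝ (⊤ : ℕ∞) u) : px (py u) = py (px u) := by
  funext q
  have hpy : py u = fun r => fderiv ℝ u r e3 :=
    funext (py_apply (hu.differentiable (by simp)))
  have hpx : px u = fun r => fderiv ℝ u r e2 :=
    funext (px_apply (hu.differentiable (by simp)))
  rw [px_apply ((contDiff_py hu).differentiable (by simp)) q,
    py_apply ((contDiff_px hu).differentiable (by simp)) q, hpy, hpx]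
  exact swap hu e2 e3 q

variable {f g : ℝ × ℝ × ℝ → ℝ}

lemma diff_slice3 (p : ℝ × ℝ × ℝ) (hf : Differentiable ℝ f) :
    Differentiable ℝ (fun s : ℝ => f (p.1, p.2.1, s)) :=
  hf.comp ((differentiable_const _).prodMk ((differentiable_const _).prodMk differentiable_id))

lemma diff_slice2 (p : ℝ × ℝ × ℝ) (hf : Differentiable ℝ f) :
    Differentiable ℝ (fun s : ℝ => f (p.1, s, p.2.2)) :=
  hf.comp ((differentiable_const _).prodMk (differentiable_id.prodMk (differentiable_const _)))

lemma diff_slice1 (p : ℝ × ℝ × ℝ) (hf : Differentiable ℝ f) :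
    Differentiable ℝ (fun s : ℝ => f (s, p.2.1, p.2.2)) :=
  hf.comp (differentiable_id.prodMk ((differentiable_const _).prodMk (differentiable_const _)))

lemma py_mul (hf : Differentiable ℝ f) (hg : Differentiable ℝ g) (p : ℝ × ℝ × ℝ) :
    py (fun q => f q * g q) p = py f p * g p + f p * py g p :=
  deriv_mul ((diff_slice3 p hf) p.2.2) ((diff_slice3 p hg) p.2.2)

lemma px_mul (hf : Differentiable ℝ f) (hg : Differentiable ℝ g) (p : ℝ × ℝ × ℝ) :
    px (fun q => f q * g q) p = px f p * g p + f p * px g p :=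
  deriv_mul ((diff_slice2 p hf) p.2.1) ((diff_slice2 p hg) p.2.1)

lemma pt_mul (hf : Differentiable ℝ f) (hg : Differentiable ℝ g) (p : ℝ × ℝ × ℝ) :
    pt (fun q => f q * g q) p = pt f p * g p + f p * pt g p :=
  deriv_mul ((diff_slice1 p hf) p.1) ((diff_slice1 p hg) p.1)

lemma py_sub (hf : Differentiable ℝ f) (hg : Differentiable ℝ g) (p : ℝ × ℝ × ℝ) :
    py (fun q => f q - g q) p = py f p - py g p :=
  deriv_sub ((diff_slice3 p hf) p.2.2) ((diff_slice3 p hg) p.2.2)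


/-- the symmetry `υ₀(B) = B(y)·u_y` solves the linearized
rdDym equation along any solution `u`. -/
theorem upsilon_symmetry (u : ℝ × ℝ × ℝ → ℝ) (B : ℝ → ℝ)
    (hu : ContDiff ℝ (⊤ : ℕ∞) u) (hB : ContDiff ℝ (⊤ : ℕ∞) B) (heq : rdDym u) :
    linearized u (fun p => B p.2.2 * py u p) := by
  intro p
  set Bc : ℝ × ℝ × ℝ → ℝ := fun q => B q.2.2 with hBcdef
  have hBc : ContDiff ℝ (⊤ : ℕ∞) Bc := hB.comp (contDiff_snd.comp contDiff_snd)
  have hBcd : Differentiable ℝ Bc := hBc.differentiable (by simp)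
  have hBc_pt : ∀ q, pt Bc q = 0 := by intro q; simp [pt, hBcdef]
  have hBc_px : ∀ q, px Bc q = 0 := by intro q; simp [px, hBcdef]
  have hBc_py : ∀ q, py Bc q = deriv B q.2.2 := by intro q; simp [py, hBcdef]
  -- smoothness of various derivatives of u
  have h_y := contDiff_py hu
  have h_x := contDiff_px hu
  have h_t := contDiff_pt hu
  have h_xy := contDiff_py h_x
  have h_xx := contDiff_px h_x
  have h_ty := contDiff_py h_t
  have h_yy := contDiff_py h_y
  -- the symmetry v
  have hv : (fun q : ℝ × ℝ × ℝ => B q.2.2 * py u q) = fun q => Bc q * py u q := rfl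
  rw [hv]
  -- first derivatives of v
  have hvt : pt (fun q => Bc q * py u q) = fun q => Bc q * py (pt u) q := by
    funext q
    rw [pt_mul hBcd (h_y.differentiable (by simp)) q, hBc_pt q, comm_ty hu]
    ring
  have hvx : px (fun q => Bc q * py u q) = fun q => Bc q * py (px u) q := by
    funext q
    rw [px_mul hBcd (h_y.differentiable (by simp)) q, hBc_px q, comm_xy hu]
    ring
  -- second derivatives of v
  have hA : py (pt (fun q => Bc q * py u q)) p
      = deriv B p.2.2 * py (pt u) p + B p.2.2 * py (py (pt u)) p := by
    rw [hvt, py_mul hBcd (h_ty.differentiable (by simp)) p, hBc_py p]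
  have hB2 : py (px (fun q => Bc q * py u q)) p
      = deriv B p.2.2 * py (px u) p + B p.2.2 * py (py (px u)) p := by
    rw [hvx, py_mul hBcd (h_xy.differentiable (by simp)) p, hBc_py p]
  have hC : px (px (fun q => Bc q * py u q)) p = B p.2.2 * py (px (px u)) p := by
    rw [hvx, px_mul hBcd (h_xy.differentiable (by simp)) p, hBc_px p, comm_xy h_x]
    ring
  have hD : px (fun q => Bc q * py u q) p = B p.2.2 * py (px u) p := by
    rw [hvx]
  have hE2 : py (fun q => Bc q * py u q) p
      = deriv B p.2.2 * py u p + B p.2.2 * py (py u) p := by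
    rw [py_mul hBcd (h_y.differentiable (by simp)) p, hBc_py p]
  -- differentiate the equation in y
  have heqf : py (pt u) = fun q => px u q * py (px u) q - py u q * px (px u) q :=
    funext heq
  have h1 : py (py (pt u)) p
      = (py (px u) p * py (px u) p + px u p * py (py (px u)) p)
        - (py (py u) p * px (px u) p + py u p * py (px (px u)) p) := by
    rw [heqf]
    rw [py_sub (f := fun q => px u q * py (px u) q) (g := fun q => py u q * px (px u) q) ((h_x.differentiable (by simp)).mul (h_xy.differentiable (by simp)))
        ((h_y.differentiable (by simp)).mul (h_xx.differentiable (by simp))) p,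
      py_mul (h_x.differentiable (by simp)) (h_xy.differentiable (by simp)) p,
      py_mul (h_y.differentiable (by simp)) (h_xx.differentiable (by simp)) p]
  have h0 := heq p
  rw [hA, hB2, hC, hD, hE2]
  linear_combination (deriv B p.2.2) * h0 + (B p.2.2) * h1
end
end

section
/- Let u : ℝ³ → ℝ be a smooth (C^∞) function of (t,x,y) satisfying the 3D rdDym equation u_ty = u_x·u_xy − u_y·u_xx everywhere, and let A : ℝ → ℝ be a smooth function with derivatives A′, A″. Then the function v(t,x,y) = A(t)·u_t + A′(t)·(x·u_x − u) + (1/2)·A″(t)·x² satisfies the linearized equation v_ty − u_x·v_xy + u_y·v_xx − u_xy·v_x + u_xx·v_y = 0 everywhere. -/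
noncomputable section

/-! ### Auxiliary machinery -/

abbrev R3 := ℝ × ℝ × ℝ

/-- Directional derivative along the `t` axis. -/
def D1 (f : R3 → ℝ) : R3 → ℝ := fun p => fderiv ℝ f p ((1:ℝ),(0:ℝ),(0:ℝ))
/-- Directional derivative along the `x` axis. -/
def D2 (f : R3 → ℝ) : R3 → ℝ := fun p => fderiv ℝ f p ((0:ℝ),(1:ℝ),(0:ℝ))
/-- Directional derivative along the `y` axis. -/
def D3 (f : R3 → ℝ) : R3 → ℝ := fun p => fderiv ℝ f p ((0:ℝ),(0:ℝ),(1:ℝ))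

lemma D1_def (f : R3 → ℝ) : D1 f = fun p => fderiv ℝ f p ((1:ℝ),(0:ℝ),(0:ℝ)) := rfl
lemma D2_def (f : R3 → ℝ) : D2 f = fun p => fderiv ℝ f p ((0:ℝ),(1:ℝ),(0:ℝ)) := rfl
lemma D3_def (f : R3 → ℝ) : D3 f = fun p => fderiv ℝ f p ((0:ℝ),(0:ℝ),(1:ℝ)) := rfl

lemma smoothD {f : R3 → ℝ} (hf : ContDiff ℝ (⊤ : ℕ∞) f) (w : R3) :
    ContDiff ℝ (⊤ : ℕ∞) (fun p => fderiv ℝ f p w) :=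
  (hf.fderiv_right (by simp)).clm_apply contDiff_const

lemma sD1 {f : R3 → ℝ} (hf : ContDiff ℝ (⊤ : ℕ∞) f) : ContDiff ℝ (⊤ : ℕ∞) (D1 f) := smoothD hf _
lemma sD2 {f : R3 → ℝ} (hf : ContDiff ℝ (⊤ : ℕ∞) f) : ContDiff ℝ (⊤ : ℕ∞) (D2 f) := smoothD hf _
lemma sD3 {f : R3 → ℝ} (hf : ContDiff ℝ (⊤ : ℕ∞) f) : ContDiff ℝ (⊤ : ℕ∞) (D3 f) := smoothD hf _

lemma smooth_deriv {A : ℝ → ℝ} (hA : ContDiff ℝ (⊤ : ℕ∞) A) : ContDiff ℝ (⊤ : ℕ∞) (deriv A) := by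
  have h : deriv A = fun x => fderiv ℝ A x 1 := funext fun x => (fderiv_apply_one_eq_deriv).symm
  rw [h]; exact (hA.fderiv_right (by simp)).clm_apply contDiff_const

lemma d_comm {f : R3 → ℝ} (hf : ContDiff ℝ (⊤ : ℕ∞) f) (p v w : R3) :
    fderiv ℝ (fun q => fderiv ℝ f q w) p v = fderiv ℝ (fun q => fderiv ℝ f q v) p w := by
  have hdf : ContDiff ℝ (⊤ : ℕ∞) (fderiv ℝ f) := hf.fderiv_right (by simp)
  have h2 : HasFDerivAt (fderiv ℝ f) (fderiv ℝ (fderiv ℝ f) p) p :=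
    (hdf.differentiable (by simp) p).hasFDerivAt
  have key : ∀ a b : R3,
      fderiv ℝ (fun q => fderiv ℝ f q b) p a = (fderiv ℝ (fderiv ℝ f) p a) b := by
    intro a b
    have h3 := ((ContinuousLinearMap.apply ℝ ℝ b).hasFDerivAt.comp p h2).fderiv
    calc fderiv ℝ (fun q => fderiv ℝ f q b) p a
        = fderiv ℝ ((ContinuousLinearMap.apply ℝ ℝ b) ∘ fderiv ℝ f) p a := rfl
      _ = ((ContinuousLinearMap.apply ℝ ℝ b).comp (fderiv ℝ (fderiv ℝ f) p)) a := by rw [h3]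
      _ = (fderiv ℝ (fderiv ℝ f) p a) b := rfl
  rw [key v w, key w v]
  exact second_derivative_symmetric (fun y => (hf.differentiable (by simp) y).hasFDerivAt) h2 v w

lemma comm12 {f : R3 → ℝ} (hf : ContDiff ℝ (⊤ : ℕ∞) f) : D2 (D1 f) = D1 (D2 f) :=
  funext fun p => d_comm hf p _ _
lemma comm13 {f : R3 → ℝ} (hf : ContDiff ℝ (⊤ : ℕ∞) f) : D3 (D1 f) = D1 (D3 f) :=
  funext fun p => d_comm hf p _ _
lemma comm23 {f : R3 → ℝ} (hf : ContDiff ℝ (⊤ : ℕ∞) f) : D3 (D2 f) = D2 (D3 f) :=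
  funext fun p => d_comm hf p _ _

lemma pt_apply_s3 {f : R3 → ℝ} {p : R3} (hf : DifferentiableAt ℝ f p) :
    pt f p = fderiv ℝ f p ((1:ℝ),(0:ℝ),(0:ℝ)) := by
  have h : HasDerivAt (fun s : ℝ => (s, p.2.1, p.2.2) : ℝ → R3) ((1:ℝ),(0:ℝ),(0:ℝ)) p.1 :=
    (hasDerivAt_id p.1).prodMk ((hasDerivAt_const _ _).prodMk (hasDerivAt_const _ _))
  have hfp : HasFDerivAt f (fderiv ℝ f p) ((fun s : ℝ => (s, p.2.1, p.2.2)) p.1) := by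
    simpa using hf.hasFDerivAt
  have h2 := (hfp.comp_hasDerivAt p.1 h).deriv
  simpa [pt, Function.comp_def] using h2

lemma px_apply_s3 {f : R3 → ℝ} {p : R3} (hf : DifferentiableAt ℝ f p) :
    px f p = fderiv ℝ f p ((0:ℝ),(1:ℝ),(0:ℝ)) := by
  have h : HasDerivAt (fun s : ℝ => (p.1, s, p.2.2) : ℝ → R3) ((0:ℝ),(1:ℝ),(0:ℝ)) p.2.1 :=
    (hasDerivAt_const _ _).prodMk ((hasDerivAt_id p.2.1).prodMk (hasDerivAt_const _ _))
  have hfp : HasFDerivAt f (fderiv ℝ f p) ((fun s : ℝ => (p.1, s, p.2.2)) p.2.1) := by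
    simpa using hf.hasFDerivAt
  have h2 := (hfp.comp_hasDerivAt p.2.1 h).deriv
  simpa [px, Function.comp_def] using h2

lemma py_apply_s3 {f : R3 → ℝ} {p : R3} (hf : DifferentiableAt ℝ f p) :
    py f p = fderiv ℝ f p ((0:ℝ),(0:ℝ),(1:ℝ)) := by
  have h : HasDerivAt (fun s : ℝ => (p.1, p.2.1, s) : ℝ → R3) ((0:ℝ),(0:ℝ),(1:ℝ)) p.2.2 :=
    (hasDerivAt_const _ _).prodMk ((hasDerivAt_const _ _).prodMk (hasDerivAt_id p.2.2))
  have hfp : HasFDerivAt f (fderiv ℝ f p) ((fun s : ℝ => (p.1, p.2.1, s)) p.2.2) := by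
    simpa using hf.hasFDerivAt
  have h2 := (hfp.comp_hasDerivAt p.2.2 h).deriv
  simpa [py, Function.comp_def] using h2

/-! ### Pointwise differentiation rules -/

section dapp
variable {f g : R3 → ℝ} {p w : R3} {c : ℝ} {φ : ℝ → ℝ}

lemma dapp_add (hf : DifferentiableAt ℝ f p) (hg : DifferentiableAt ℝ g p) :
    fderiv ℝ (fun q => f q + g q) p w = fderiv ℝ f p w + fderiv ℝ g p w := by
  rw [fderiv_fun_add hf hg]; rfl

lemma dapp_sub (hf : DifferentiableAt ℝ f p) (hg : DifferentiableAt ℝ g p) :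
    fderiv ℝ (fun q => f q - g q) p w = fderiv ℝ f p w - fderiv ℝ g p w := by
  rw [fderiv_fun_sub hf hg]; rfl

lemma dapp_mul (hf : DifferentiableAt ℝ f p) (hg : DifferentiableAt ℝ g p) :
    fderiv ℝ (fun q => f q * g q) p w = f p * fderiv ℝ g p w + g p * fderiv ℝ f p w := by
  rw [fderiv_fun_mul hf hg]; rfl

lemma dapp_const : fderiv ℝ (fun _ : R3 => c) p w = 0 := by
  rw [fderiv_fun_const]; rfl

lemma dapp_fst (hφ : DifferentiableAt ℝ φ p.1) :
    fderiv ℝ (fun q : R3 => φ q.1) p w = deriv φ p.1 * w.1 := by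
  have h := (hφ.hasDerivAt.comp_hasFDerivAt p
    (hasFDerivAt_fst : HasFDerivAt (Prod.fst) (ContinuousLinearMap.fst ℝ ℝ (ℝ × ℝ)) p)).fderiv
  calc fderiv ℝ (fun q : R3 => φ q.1) p w
      = fderiv ℝ (φ ∘ Prod.fst) p w := rfl
    _ = (deriv φ p.1 • ContinuousLinearMap.fst ℝ ℝ (ℝ × ℝ)) w := by rw [h]
    _ = deriv φ p.1 * w.1 := rfl

lemma dapp_x : fderiv ℝ (fun q : R3 => q.2.1) p w = w.2.1 := by
  have h : HasFDerivAt (fun q : R3 => q.2.1)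
      ((ContinuousLinearMap.fst ℝ ℝ ℝ).comp (ContinuousLinearMap.snd ℝ ℝ (ℝ × ℝ))) p :=
    ((ContinuousLinearMap.fst ℝ ℝ ℝ).comp (ContinuousLinearMap.snd ℝ ℝ (ℝ × ℝ))).hasFDerivAt
  rw [h.fderiv]; rfl

lemma dapp_xsq : fderiv ℝ (fun q : R3 => q.2.1 ^ 2) p w = 2 * p.2.1 * w.2.1 := by
  have h : (fun q : R3 => q.2.1 ^ 2) = fun q : R3 => q.2.1 * q.2.1 := by funext q; ring
  rw [h, dapp_mul (by fun_prop) (by fun_prop), dapp_x]; ring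

/-! folding lemmas -/

lemma fold11 (f : R3 → ℝ) (p : R3) :
    fderiv ℝ (D1 f) p ((1:ℝ),(0:ℝ),(0:ℝ)) = D1 (D1 f) p := rfl
lemma fold12 (f : R3 → ℝ) (p : R3) :
    fderiv ℝ (D1 f) p ((0:ℝ),(1:ℝ),(0:ℝ)) = D2 (D1 f) p := rfl
lemma fold13 (f : R3 → ℝ) (p : R3) :
    fderiv ℝ (D1 f) p ((0:ℝ),(0:ℝ),(1:ℝ)) = D3 (D1 f) p := rfl
lemma fold21 (f : R3 → ℝ) (p : R3) :
    fderiv ℝ (D2 f) p ((1:ℝ),(0:ℝ),(0:ℝ)) = D1 (D2 f) p := rfl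
lemma fold22 (f : R3 → ℝ) (p : R3) :
    fderiv ℝ (D2 f) p ((0:ℝ),(1:ℝ),(0:ℝ)) = D2 (D2 f) p := rfl
lemma fold23 (f : R3 → ℝ) (p : R3) :
    fderiv ℝ (D2 f) p ((0:ℝ),(0:ℝ),(1:ℝ)) = D3 (D2 f) p := rfl
lemma fold31 (f : R3 → ℝ) (p : R3) :
    fderiv ℝ (D3 f) p ((1:ℝ),(0:ℝ),(0:ℝ)) = D1 (D3 f) p := rfl
lemma fold32 (f : R3 → ℝ) (p : R3) :
    fderiv ℝ (D3 f) p ((0:ℝ),(1:ℝ),(0:ℝ)) = D2 (D3 f) p := rfl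
lemma fold33 (f : R3 → ℝ) (p : R3) :
    fderiv ℝ (D3 f) p ((0:ℝ),(0:ℝ),(1:ℝ)) = D3 (D3 f) p := rfl

end dapp

/-- the symmetry `θ₀(A) = A·u_t + A′·(x·u_x − u) + (1/2)·A″·x²`
solves the linearized rdDym equation along any solution `u`. -/
theorem theta_zero_symmetry (u : ℝ × ℝ × ℝ → ℝ) (A : ℝ → ℝ)
    (hu : ContDiff ℝ (⊤ : ℕ∞) u) (hA : ContDiff ℝ (⊤ : ℕ∞) A) (heq : rdDym u) :
    linearized u (fun p =>
      A p.1 * pt u p + deriv A p.1 * (p.2.1 * px u p - u p)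
        + (1 / 2) * deriv (deriv A) p.1 * p.2.1 ^ 2) := by
  -- smoothness of all atoms
  have hA1 : ContDiff ℝ (⊤ : ℕ∞) (deriv A) := smooth_deriv hA
  have hA2 : ContDiff ℝ (⊤ : ℕ∞) (deriv (deriv A)) := smooth_deriv hA1
  have hA3 : ContDiff ℝ (⊤ : ℕ∞) (deriv (deriv (deriv A))) := smooth_deriv hA2
  have h1 : ContDiff ℝ (⊤ : ℕ∞) (D1 u) := sD1 hu
  have h2 : ContDiff ℝ (⊤ : ℕ∞) (D2 u) := sD2 hu
  have h3 : ContDiff ℝ (⊤ : ℕ∞) (D3 u) := sD3 hu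
  -- differentiability hypotheses for fun_prop
  have du : Differentiable ℝ u := hu.differentiable (by simp)
  have dA : Differentiable ℝ A := hA.differentiable (by simp)
  have dA1 : Differentiable ℝ (deriv A) := hA1.differentiable (by simp)
  have dA2 : Differentiable ℝ (deriv (deriv A)) := hA2.differentiable (by simp)
  have dA3 : Differentiable ℝ (deriv (deriv (deriv A))) := hA3.differentiable (by simp)
  have d1 : Differentiable ℝ (D1 u) := h1.differentiable (by simp)
  have d2 : Differentiable ℝ (D2 u) := h2.differentiable (by simp)
  have d3 : Differentiable ℝ (D3 u) := h3.differentiable (by simp)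
  have d11 : Differentiable ℝ (D1 (D1 u)) := (sD1 h1).differentiable (by simp)
  have d12 : Differentiable ℝ (D1 (D2 u)) := (sD1 h2).differentiable (by simp)
  have d21 : Differentiable ℝ (D2 (D1 u)) := (sD2 h1).differentiable (by simp)
  have d22 : Differentiable ℝ (D2 (D2 u)) := (sD2 h2).differentiable (by simp)
  have d31 : Differentiable ℝ (D3 (D1 u)) := (sD3 h1).differentiable (by simp)
  have d32 : Differentiable ℝ (D3 (D2 u)) := (sD3 h2).differentiable (by simp)
  -- folding of raw fderiv's of u itself
  have hfu1 : ∀ q, fderiv ℝ u q ((1:ℝ),(0:ℝ),(0:ℝ)) = D1 u q := fun q => rfl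
  have hfu2 : ∀ q, fderiv ℝ u q ((0:ℝ),(1:ℝ),(0:ℝ)) = D2 u q := fun q => rfl
  have hfu3 : ∀ q, fderiv ℝ u q ((0:ℝ),(0:ℝ),(1:ℝ)) = D3 u q := fun q => rfl
  -- function-level identification of pt/px/py on u
  have eu1 : pt u = D1 u := by funext q; exact pt_apply_s3 (du q)
  have eu2 : px u = D2 u := by funext q; exact px_apply_s3 (du q)
  have eu3 : py u = D3 u := by funext q; exact py_apply_s3 (du q)
  -- the constraint, function level
  have hCfun : D3 (D1 u) = fun q => D2 u q * D3 (D2 u) q - D3 u q * D2 (D2 u) q := by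
    funext q
    have h := heq q
    rw [eu1, eu2, eu3] at h
    rw [py_apply_s3 (d1 q), py_apply_s3 (d2 q), px_apply_s3 (d2 q)] at h
    exact h
  -- the generating function as an explicit expression in D-notation
  have hveq : (fun p : R3 =>
      A p.1 * pt u p + deriv A p.1 * (p.2.1 * px u p - u p)
        + (1 / 2) * deriv (deriv A) p.1 * p.2.1 ^ 2)
      = fun q : R3 => A q.1 * D1 u q + deriv A q.1 * (q.2.1 * D2 u q - u q)
        + 1 / 2 * deriv (deriv A) q.1 * q.2.1 ^ 2 := by
    funext q
    rw [pt_apply_s3 (du q), px_apply_s3 (du q)]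
    rfl
  rw [hveq]
  -- smoothness of v
  have hV : ContDiff ℝ (⊤ : ℕ∞) (fun q : R3 => A q.1 * D1 u q + deriv A q.1 * (q.2.1 * D2 u q - u q)
      + 1 / 2 * deriv (deriv A) q.1 * q.2.1 ^ 2) := by fun_prop
  have dV : Differentiable ℝ (fun q : R3 => A q.1 * D1 u q
      + deriv A q.1 * (q.2.1 * D2 u q - u q)
      + 1 / 2 * deriv (deriv A) q.1 * q.2.1 ^ 2) := hV.differentiable (by simp)
  -- first derivatives of v
  have hVt : D1 (fun q : R3 => A q.1 * D1 u q + deriv A q.1 * (q.2.1 * D2 u q - u q)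
      + 1 / 2 * deriv (deriv A) q.1 * q.2.1 ^ 2)
      = fun q : R3 => deriv A q.1 * D1 u q + A q.1 * D1 (D1 u) q
        + deriv (deriv A) q.1 * (q.2.1 * D2 u q - u q)
        + deriv A q.1 * (q.2.1 * D1 (D2 u) q - D1 u q)
        + 1 / 2 * deriv (deriv (deriv A)) q.1 * q.2.1 ^ 2 := by
    funext q
    rw [D1_def]
    simp (disch := fun_prop) only [dapp_add, dapp_sub, dapp_mul, dapp_fst, dapp_x, dapp_xsq,
      dapp_const, fold11, fold12, fold13, fold21, fold22, fold23, fold31, fold32, fold33,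
      hfu1, hfu2, hfu3]
    ring
  have hVx : D2 (fun q : R3 => A q.1 * D1 u q + deriv A q.1 * (q.2.1 * D2 u q - u q)
      + 1 / 2 * deriv (deriv A) q.1 * q.2.1 ^ 2)
      = fun q : R3 => A q.1 * D2 (D1 u) q + deriv A q.1 * (q.2.1 * D2 (D2 u) q)
        + deriv (deriv A) q.1 * q.2.1 := by
    funext q
    rw [D2_def]
    simp (disch := fun_prop) only [dapp_add, dapp_sub, dapp_mul, dapp_fst, dapp_x, dapp_xsq,
      dapp_const, fold11, fold12, fold13, fold21, fold22, fold23, fold31, fold32, fold33,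
      hfu1, hfu2, hfu3]
    ring
  -- smoothness of first derivatives (needed for the outer py/px)
  have hVt' : ContDiff ℝ (⊤ : ℕ∞) (fun q : R3 => deriv A q.1 * D1 u q + A q.1 * D1 (D1 u) q
        + deriv (deriv A) q.1 * (q.2.1 * D2 u q - u q)
        + deriv A q.1 * (q.2.1 * D1 (D2 u) q - D1 u q)
        + 1 / 2 * deriv (deriv (deriv A)) q.1 * q.2.1 ^ 2) := by
    have h11 : ContDiff ℝ (⊤ : ℕ∞) (D1 (D1 u)) := sD1 h1
    have h12 : ContDiff ℝ (⊤ : ℕ∞) (D1 (D2 u)) := sD1 h2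
    fun_prop
  have hVx' : ContDiff ℝ (⊤ : ℕ∞) (fun q : R3 => A q.1 * D2 (D1 u) q
        + deriv A q.1 * (q.2.1 * D2 (D2 u) q) + deriv (deriv A) q.1 * q.2.1) := by
    have h21 : ContDiff ℝ (⊤ : ℕ∞) (D2 (D1 u)) := sD2 h1
    have h22 : ContDiff ℝ (⊤ : ℕ∞) (D2 (D2 u)) := sD2 h2
    fun_prop
  have h11 : ContDiff ℝ (⊤ : ℕ∞) (D1 (D1 u)) := sD1 h1
  have h12 : ContDiff ℝ (⊤ : ℕ∞) (D1 (D2 u)) := sD1 h2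
  have h21 : ContDiff ℝ (⊤ : ℕ∞) (D2 (D1 u)) := sD2 h1
  have h22 : ContDiff ℝ (⊤ : ℕ∞) (D2 (D2 u)) := sD2 h2
  have h32 : ContDiff ℝ (⊤ : ℕ∞) (D3 (D2 u)) := sD3 h2
  have dVt : Differentiable ℝ _ := hVt'.differentiable (by simp)
  have dVx : Differentiable ℝ _ := hVx'.differentiable (by simp)
  have eV1 : pt (fun q : R3 => A q.1 * D1 u q + deriv A q.1 * (q.2.1 * D2 u q - u q)
      + 1 / 2 * deriv (deriv A) q.1 * q.2.1 ^ 2) = D1 (fun q : R3 => A q.1 * D1 u q + deriv A q.1 * (q.2.1 * D2 u q - u q)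
      + 1 / 2 * deriv (deriv A) q.1 * q.2.1 ^ 2) := by
    funext q; exact pt_apply_s3 (dV q)
  have eV2 : px (fun q : R3 => A q.1 * D1 u q + deriv A q.1 * (q.2.1 * D2 u q - u q)
      + 1 / 2 * deriv (deriv A) q.1 * q.2.1 ^ 2) = D2 (fun q : R3 => A q.1 * D1 u q + deriv A q.1 * (q.2.1 * D2 u q - u q)
      + 1 / 2 * deriv (deriv A) q.1 * q.2.1 ^ 2) := by
    funext q; exact px_apply_s3 (dV q)
  intro p
  -- the two differentiated constraints, canonicalized
  have ct := congrArg (fun g : R3 → ℝ => fderiv ℝ g p ((1:ℝ),(0:ℝ),(0:ℝ))) hCfun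
  simp (disch := fun_prop) only [dapp_add, dapp_sub, dapp_mul, dapp_fst, dapp_x, dapp_xsq,
    dapp_const, fold11, fold12, fold13, fold21, fold22, fold23, fold31, fold32, fold33,
    hfu1, hfu2, hfu3] at ct
  simp only [comm12 hu, ← comm13 hu, ← comm23 hu, ← comm13 h1, ← comm13 h2, ← comm23 h1,
    comm12 h2, ← comm23 h2] at ct
  have cx := congrArg (fun g : R3 → ℝ => fderiv ℝ g p ((0:ℝ),(1:ℝ),(0:ℝ))) hCfun
  simp (disch := fun_prop) only [dapp_add, dapp_sub, dapp_mul, dapp_fst, dapp_x, dapp_xsq,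
    dapp_const, fold11, fold12, fold13, fold21, fold22, fold23, fold31, fold32, fold33,
    hfu1, hfu2, hfu3] at cx
  simp only [comm12 hu, ← comm13 hu, ← comm23 hu, ← comm13 h1, ← comm13 h2, ← comm23 h1,
    comm12 h2, ← comm23 h2] at cx
  -- rewrite the goal
  rw [eV1, eV2, eu2, eu3, hVt, hVx]
  rw [py_apply_s3 (dVt p), py_apply_s3 (dVx p), px_apply_s3 (dVx p), py_apply_s3 (d2 p), px_apply_s3 (d2 p),
    py_apply_s3 (dV p)]
  simp (disch := fun_prop) only [dapp_add, dapp_sub, dapp_mul, dapp_fst, dapp_x, dapp_xsq,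
    dapp_const, fold11, fold12, fold13, fold21, fold22, fold23, fold31, fold32, fold33,
    hfu1, hfu2, hfu3]
  simp only [comm12 hu, ← comm13 hu, ← comm23 hu, ← comm13 h1, ← comm13 h2, ← comm23 h1,
    comm12 h2, ← comm23 h2]
  linear_combination A p.1 * ct + deriv A p.1 * p.2.1 * cx
end
end

section
/- Let u : ℝ³ → ℝ be a smooth (C^∞) function of (t,x,y) satisfying the 3D rdDym equation u_ty = u_x·u_xy − u_y·u_xx everywhere, and let A : ℝ → ℝ be a smooth function with derivative A′. Then the function v(t,x,y) = A(t)·u_x + A′(t)·x satisfies the linearized equation v_ty − u_x·v_xy + u_y·v_xx − u_xy·v_x + u_xx·v_y = 0 everywhere. -/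
noncomputable section

section Helpers

variable {F : Type*} [NormedAddCommGroup F] [NormedSpace ℝ F]

lemma pt_eq' (g : ℝ × ℝ × ℝ → ℝ) (hg : Differentiable ℝ g) (p : ℝ × ℝ × ℝ) :
    pt g p = fderiv ℝ g p (1, 0, 0) := by
  have hL : HasDerivAt (fun s : ℝ => ((s, p.2.1, p.2.2) : ℝ × ℝ × ℝ))
      ((1 : ℝ), (0 : ℝ), (0 : ℝ)) p.1 :=
    (hasDerivAt_id p.1).prodMk ((hasDerivAt_const _ _).prodMk (hasDerivAt_const _ _))
  have hp : ((p.1, p.2.1, p.2.2) : ℝ × ℝ × ℝ) = p := by simp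
  have h := ((hg p).hasFDerivAt).comp_hasDerivAt p.1 (by rw [← hp] at *; exact hL)
  have h' : HasDerivAt (fun s => g (s, p.2.1, p.2.2)) (fderiv ℝ g p (1, 0, 0)) p.1 := by
    simpa [Function.comp_def, hp] using h
  exact h'.deriv

lemma px_eq' (g : ℝ × ℝ × ℝ → ℝ) (hg : Differentiable ℝ g) (p : ℝ × ℝ × ℝ) :
    px g p = fderiv ℝ g p (0, 1, 0) := by
  have hL : HasDerivAt (fun s : ℝ => ((p.1, s, p.2.2) : ℝ × ℝ × ℝ))
      ((0 : ℝ), (1 : ℝ), (0 : ℝ)) p.2.1 :=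
    (hasDerivAt_const _ _).prodMk ((hasDerivAt_id p.2.1).prodMk (hasDerivAt_const _ _))
  have hp : ((p.1, p.2.1, p.2.2) : ℝ × ℝ × ℝ) = p := by simp
  have h := ((hg p).hasFDerivAt).comp_hasDerivAt p.2.1 (by rw [← hp] at *; exact hL)
  have h' : HasDerivAt (fun s => g (p.1, s, p.2.2)) (fderiv ℝ g p (0, 1, 0)) p.2.1 := by
    simpa [Function.comp_def, hp] using h
  exact h'.deriv

lemma py_eq' (g : ℝ × ℝ × ℝ → ℝ) (hg : Differentiable ℝ g) (p : ℝ × ℝ × ℝ) :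
    py g p = fderiv ℝ g p (0, 0, 1) := by
  have hL : HasDerivAt (fun s : ℝ => ((p.1, p.2.1, s) : ℝ × ℝ × ℝ))
      ((0 : ℝ), (0 : ℝ), (1 : ℝ)) p.2.2 :=
    (hasDerivAt_const _ _).prodMk ((hasDerivAt_const _ _).prodMk (hasDerivAt_id p.2.2))
  have hp : ((p.1, p.2.1, p.2.2) : ℝ × ℝ × ℝ) = p := by simp
  have h := ((hg p).hasFDerivAt).comp_hasDerivAt p.2.2 (by rw [← hp] at *; exact hL)
  have h' : HasDerivAt (fun s => g (p.1, p.2.1, s)) (fderiv ℝ g p (0, 0, 1)) p.2.2 := by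
    simpa [Function.comp_def, hp] using h
  exact h'.deriv

lemma fderiv_clm_apply_const' {G : ℝ × ℝ × ℝ → (ℝ × ℝ × ℝ) →L[ℝ] F} {p : ℝ × ℝ × ℝ}
    (hG : DifferentiableAt ℝ G p) (w v : ℝ × ℝ × ℝ) :
    fderiv ℝ (fun q => G q w) p v = fderiv ℝ G p v w := by
  have h := (ContinuousLinearMap.apply ℝ F w).hasFDerivAt.comp p hG.hasFDerivAt
  have : fderiv ℝ (fun q => G q w) p =
      (ContinuousLinearMap.apply ℝ F w).comp (fderiv ℝ G p) := h.fderiv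
  rw [this]; rfl

lemma dmul' {f g : ℝ × ℝ × ℝ → ℝ} {p : ℝ × ℝ × ℝ} (hf : DifferentiableAt ℝ f p)
    (hg : DifferentiableAt ℝ g p) (v : ℝ × ℝ × ℝ) :
    fderiv ℝ (fun q => f q * g q) p v = fderiv ℝ f p v * g p + f p * fderiv ℝ g p v := by
  rw [fderiv_fun_mul hf hg]
  simp only [ContinuousLinearMap.add_apply, ContinuousLinearMap.smul_apply, smul_eq_mul]
  ring

lemma dadd' {f g : ℝ × ℝ × ℝ → ℝ} {p : ℝ × ℝ × ℝ} (hf : DifferentiableAt ℝ f p)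
    (hg : DifferentiableAt ℝ g p) (v : ℝ × ℝ × ℝ) :
    fderiv ℝ (fun q => f q + g q) p v = fderiv ℝ f p v + fderiv ℝ g p v := by
  rw [fderiv_fun_add hf hg]; rfl

lemma dsub' {f g : ℝ × ℝ × ℝ → ℝ} {p : ℝ × ℝ × ℝ} (hf : DifferentiableAt ℝ f p)
    (hg : DifferentiableAt ℝ g p) (v : ℝ × ℝ × ℝ) :
    fderiv ℝ (fun q => f q - g q) p v = fderiv ℝ f p v - fderiv ℝ g p v := by
  rw [fderiv_fun_sub hf hg]; rfl

lemma dfst' (A : ℝ → ℝ) {p : ℝ × ℝ × ℝ} (hA : DifferentiableAt ℝ A p.1) (v : ℝ × ℝ × ℝ) :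
    fderiv ℝ (fun q : ℝ × ℝ × ℝ => A q.1) p v = deriv A p.1 * v.1 := by
  have h : HasFDerivAt (fun q : ℝ × ℝ × ℝ => A q.1)
      ((ContinuousLinearMap.smulRight (1 : ℝ →L[ℝ] ℝ) (deriv A p.1)).comp
        (ContinuousLinearMap.fst ℝ ℝ (ℝ × ℝ))) p :=
    hA.hasDerivAt.hasFDerivAt.comp p (hasFDerivAt_fst (p := p))
  rw [h.fderiv]
  simp [mul_comm]

lemma dx21' {p : ℝ × ℝ × ℝ} (v : ℝ × ℝ × ℝ) :
    fderiv ℝ (fun q : ℝ × ℝ × ℝ => q.2.1) p v = v.2.1 := by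
  have h : HasFDerivAt (fun q : ℝ × ℝ × ℝ => q.2.1)
      ((ContinuousLinearMap.fst ℝ ℝ ℝ).comp (ContinuousLinearMap.snd ℝ ℝ (ℝ × ℝ))) p :=
    ((ContinuousLinearMap.fst ℝ ℝ ℝ).comp (ContinuousLinearMap.snd ℝ ℝ (ℝ × ℝ))).hasFDerivAt
  rw [h.fderiv]; rfl

end Helpers


set_option maxHeartbeats 2000000 in
/-- the symmetry `θ₋₁(A) = A·u_x + A′·x` solves the linearized
rdDym equation along any solution `u`. -/
theorem theta_minus_one_symmetry (u : ℝ × ℝ × ℝ → ℝ) (A : ℝ → ℝ)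
    (hu : ContDiff ℝ (⊤ : ℕ∞) u) (hA : ContDiff ℝ (⊤ : ℕ∞) A) (heq : rdDym u) :
    linearized u (fun p => A p.1 * px u p + deriv A p.1 * p.2.1) := by
  intro p
  set F1 := fderiv ℝ u with hF1def
  set F2 := fderiv ℝ F1 with hF2def
  set F3 := fderiv ℝ F2 with hF3def
  have huD : Differentiable ℝ u := hu.differentiable (by simp)
  have hF1 : ContDiff ℝ (⊤ : ℕ∞) F1 := hu.fderiv_right (by simp)
  have hF1D : Differentiable ℝ F1 := hF1.differentiable (by simp)
  have hF2 : ContDiff ℝ (⊤ : ℕ∞) F2 := hF1.fderiv_right (by simp)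
  have hF2D : Differentiable ℝ F2 := hF2.differentiable (by simp)
  have hF1w : ∀ w : ℝ × ℝ × ℝ, Differentiable ℝ (fun q => F1 q w) := fun w =>
    (hF1.clm_apply contDiff_const).differentiable (by simp)
  have hF2w : ∀ w z : ℝ × ℝ × ℝ, Differentiable ℝ (fun q => F2 q w z) := fun w z =>
    ((hF2.clm_apply contDiff_const).clm_apply contDiff_const).differentiable (by simp)
  have hF2w' : ∀ w : ℝ × ℝ × ℝ, Differentiable ℝ (fun q => F2 q w) := fun w =>
    (hF2.clm_apply contDiff_const).differentiable (by simp)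
  have hA2 : ContDiff ℝ (⊤ : ℕ∞) A := hA.of_le (by simp)
  have hdA : ContDiff ℝ (⊤ : ℕ∞) (deriv A) := (contDiff_infty_iff_deriv.mp hA2).2
  have hddA : ContDiff ℝ (⊤ : ℕ∞) (deriv (deriv A)) := (contDiff_infty_iff_deriv.mp hdA).2
  have htop : (1 : WithTop ℕ∞) ≤ ((⊤ : ℕ∞) : WithTop ℕ∞) := by exact_mod_cast le_top
  have hAD : Differentiable ℝ A := hA2.differentiable (by simp)
  have hdAD : Differentiable ℝ (deriv A) := hdA.differentiable (by simp)
  have hAf : Differentiable ℝ (fun q : ℝ × ℝ × ℝ => A q.1) :=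
    (hA2.comp contDiff_fst).differentiable (by simp)
  have hdAf : Differentiable ℝ (fun q : ℝ × ℝ × ℝ => deriv A q.1) :=
    (hdA.comp contDiff_fst).differentiable (by simp)
  have hddAf : Differentiable ℝ (fun q : ℝ × ℝ × ℝ => deriv (deriv A) q.1) :=
    (hddA.comp contDiff_fst).differentiable (by simp)
  have hx21 : Differentiable ℝ (fun q : ℝ × ℝ × ℝ => q.2.1) :=
    ((ContinuousLinearMap.fst ℝ ℝ ℝ).comp (ContinuousLinearMap.snd ℝ ℝ (ℝ × ℝ))).differentiable
  have hd1 : ∀ (q w v : ℝ × ℝ × ℝ), fderiv ℝ (fun r => F1 r w) q v = F2 q v w := fun q w v =>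
    fderiv_clm_apply_const' (hF1D q) w v
  have hd2 : ∀ (q w z v : ℝ × ℝ × ℝ), fderiv ℝ (fun r => F2 r w z) q v = F3 q v w z := by
    intro q w z v
    have h1 : fderiv ℝ (fun r => (fun r' => F2 r' w) r z) q v
        = fderiv ℝ (fun r => F2 r w) q v z := fderiv_clm_apply_const' (hF2w' w q) z v
    have h2 : fderiv ℝ (fun r => F2 r w) q v = F3 q v w := fderiv_clm_apply_const' (hF2D q) w v
    simpa [h2] using h1
  have symm2 : ∀ (q v w : ℝ × ℝ × ℝ), F2 q v w = F2 q w v := fun q v w =>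
    second_derivative_symmetric (fun y => (huD y).hasFDerivAt) ((hF1D q).hasFDerivAt) v w
  have symm3a : ∀ (q v w z : ℝ × ℝ × ℝ), F3 q v w z = F3 q w v z := by
    intro q v w z
    have h := second_derivative_symmetric (f := F1) (f' := F2) (f'' := F3 q)
      (fun y => (hF1D y).hasFDerivAt) ((hF2D q).hasFDerivAt) v w
    exact congrFun (congrArg _ h) z
  have symm3b : ∀ (q v w z : ℝ × ℝ × ℝ), F3 q v w z = F3 q v z w := by
    intro q v w z
    have hswap : (fun r => F2 r w z) = (fun r => F2 r z w) := funext fun r => symm2 r w z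
    have h1 := hd2 q w z v
    have h2 := hd2 q z w v
    rw [hswap] at h1
    exact h1.symm.trans h2
  -- partials of u
  have hptu : pt u = fun q => F1 q (1, 0, 0) := funext fun q => pt_eq' u huD q
  have hpxu : px u = fun q => F1 q (0, 1, 0) := funext fun q => px_eq' u huD q
  have hpyu : py u = fun q => F1 q (0, 0, 1) := funext fun q => py_eq' u huD q
  -- the rdDym equation in fderiv form
  have hEq : ∀ q, F2 q (0,0,1) (1,0,0)
      = F1 q (0,1,0) * F2 q (0,0,1) (0,1,0) - F1 q (0,0,1) * F2 q (0,1,0) (0,1,0) := by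
    intro q
    have h := heq q
    rw [hptu, hpxu, hpyu] at h
    rw [py_eq' _ (hF1w (1,0,0)) q, py_eq' _ (hF1w (0,1,0)) q, px_eq' _ (hF1w (0,1,0)) q] at h
    rw [hd1 q (1,0,0) (0,0,1), hd1 q (0,1,0) (0,0,1), hd1 q (0,1,0) (0,1,0)] at h
    exact h
  -- differentiate the rdDym equation in the x-direction
  have hEqfun : (fun q => F2 q (0,0,1) (1,0,0))
      = fun q => F1 q (0,1,0) * F2 q (0,0,1) (0,1,0) - F1 q (0,0,1) * F2 q (0,1,0) (0,1,0) :=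
    funext hEq
  have hEq' : F3 p (0,1,0) (0,0,1) (1,0,0)
      = (F2 p (0,1,0) (0,1,0) * F2 p (0,0,1) (0,1,0)
          + F1 p (0,1,0) * F3 p (0,1,0) (0,0,1) (0,1,0))
        - (F2 p (0,1,0) (0,0,1) * F2 p (0,1,0) (0,1,0)
          + F1 p (0,0,1) * F3 p (0,1,0) (0,1,0) (0,1,0)) := by
    have hL := hd2 p (0,0,1) (1,0,0) (0,1,0)
    rw [hEqfun] at hL
    rw [dsub' ((hF1w (0,1,0) p).fun_mul (hF2w (0,0,1) (0,1,0) p))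
          ((hF1w (0,0,1) p).fun_mul (hF2w (0,1,0) (0,1,0) p)),
        dmul' (hF1w (0,1,0) p) (hF2w (0,0,1) (0,1,0) p),
        dmul' (hF1w (0,0,1) p) (hF2w (0,1,0) (0,1,0) p),
        hd1 p (0,1,0) (0,1,0), hd1 p (0,0,1) (0,1,0),
        hd2 p (0,0,1) (0,1,0) (0,1,0), hd2 p (0,1,0) (0,1,0) (0,1,0)] at hL
    exact hL.symm
  -- the symmetry v, rewritten via F1
  simp only [hpxu]
  set V : ℝ × ℝ × ℝ → ℝ := fun q => A q.1 * F1 q (0, 1, 0) + deriv A q.1 * q.2.1 with hVdef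
  have hVD : Differentiable ℝ V := (hAf.mul (hF1w (0,1,0))).add (hdAf.mul hx21)
  have hdV : ∀ (q w : ℝ × ℝ × ℝ), fderiv ℝ V q w
      = deriv A q.1 * w.1 * F1 q (0,1,0) + A q.1 * F2 q w (0,1,0)
        + deriv (deriv A) q.1 * w.1 * q.2.1 + deriv A q.1 * w.2.1 := by
    intro q w
    rw [hVdef]
    rw [dadd' ((hAf q).fun_mul (hF1w (0,1,0) q)) ((hdAf q).fun_mul (hx21 q)),
        dmul' (hAf q) (hF1w (0,1,0) q), dmul' (hdAf q) (hx21 q),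
        dfst' A (hAD q.1) w, dfst' (deriv A) (hdAD q.1) w, hd1 q (0,1,0) w, dx21' w]
    ring
  -- first partials of V
  have hptV : pt V = fun q => deriv A q.1 * F1 q (0,1,0) + A q.1 * F2 q (1,0,0) (0,1,0)
      + deriv (deriv A) q.1 * q.2.1 := by
    funext q
    rw [pt_eq' V hVD q, hdV q (1,0,0)]
    norm_num
  have hpxV : px V = fun q => A q.1 * F2 q (0,1,0) (0,1,0) + deriv A q.1 := by
    funext q
    rw [px_eq' V hVD q, hdV q (0,1,0)]
    norm_num
  have hpyV : py V p = A p.1 * F2 p (0,0,1) (0,1,0) := by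
    rw [py_eq' V hVD p, hdV p (0,0,1)]
    norm_num
  -- second partials of V
  have hP1D : Differentiable ℝ (fun q => deriv A q.1 * F1 q (0,1,0)
      + A q.1 * F2 q (1,0,0) (0,1,0) + deriv (deriv A) q.1 * q.2.1) :=
    ((hdAf.mul (hF1w (0,1,0))).add (hAf.mul (hF2w (1,0,0) (0,1,0)))).add (hddAf.mul hx21)
  have hP2D : Differentiable ℝ (fun q => A q.1 * F2 q (0,1,0) (0,1,0) + deriv A q.1) :=
    (hAf.mul (hF2w (0,1,0) (0,1,0))).add hdAf
  have g1 : py (pt V) p = deriv A p.1 * F2 p (0,0,1) (0,1,0)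
      + A p.1 * F3 p (0,0,1) (1,0,0) (0,1,0) := by
    rw [hptV, py_eq' _ hP1D p]
    rw [dadd' ((hdAf p).fun_mul (hF1w (0,1,0) p) |>.fun_add ((hAf p).fun_mul (hF2w (1,0,0) (0,1,0) p)))
          ((hddAf p).fun_mul (hx21 p)),
        dadd' ((hdAf p).fun_mul (hF1w (0,1,0) p)) ((hAf p).fun_mul (hF2w (1,0,0) (0,1,0) p)),
        dmul' (hdAf p) (hF1w (0,1,0) p), dmul' (hAf p) (hF2w (1,0,0) (0,1,0) p),
        dmul' (hddAf p) (hx21 p),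
        dfst' A (hAD p.1), dfst' (deriv A) (hdAD p.1), dfst' (deriv (deriv A)) ((hddA.differentiable (by simp)) p.1),
        hd1 p (0,1,0) (0,0,1), hd2 p (1,0,0) (0,1,0) (0,0,1), dx21']
    norm_num
  have g2 : py (px V) p = A p.1 * F3 p (0,0,1) (0,1,0) (0,1,0) := by
    rw [hpxV, py_eq' _ hP2D p]
    rw [dadd' ((hAf p).fun_mul (hF2w (0,1,0) (0,1,0) p)) (hdAf p),
        dmul' (hAf p) (hF2w (0,1,0) (0,1,0) p),
        dfst' A (hAD p.1), dfst' (deriv A) (hdAD p.1),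
        hd2 p (0,1,0) (0,1,0) (0,0,1)]
    norm_num
  have g3 : px (px V) p = A p.1 * F3 p (0,1,0) (0,1,0) (0,1,0) := by
    rw [hpxV, px_eq' _ hP2D p]
    rw [dadd' ((hAf p).fun_mul (hF2w (0,1,0) (0,1,0) p)) (hdAf p),
        dmul' (hAf p) (hF2w (0,1,0) (0,1,0) p),
        dfst' A (hAD p.1), dfst' (deriv A) (hdAD p.1),
        hd2 p (0,1,0) (0,1,0) (0,1,0)]
    norm_num
  have g4 : px V p = A p.1 * F2 p (0,1,0) (0,1,0) + deriv A p.1 := by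
    rw [px_eq' V hVD p, hdV p (0,1,0)]; norm_num
  have g6 : py (fun q => F1 q (0,1,0)) p = F2 p (0,0,1) (0,1,0) := by
    rw [py_eq' _ (hF1w (0,1,0)) p, hd1 p (0,1,0) (0,0,1)]
  have g7 : px (fun q => F1 q (0,1,0)) p = F2 p (0,1,0) (0,1,0) := by
    rw [px_eq' _ (hF1w (0,1,0)) p, hd1 p (0,1,0) (0,1,0)]
  have g8 : py u p = F1 p (0,0,1) := py_eq' u huD p
  rw [g1, g2, g3, g4, hpyV, g6, g7, g8]
  -- use third-derivative symmetry
  have s1 : F3 p (0,0,1) (1,0,0) (0,1,0) = F3 p (0,1,0) (0,0,1) (1,0,0) := by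
    rw [symm3b p (0,0,1) (1,0,0) (0,1,0), symm3a p (0,0,1) (0,1,0) (1,0,0)]
  have s2 : F3 p (0,0,1) (0,1,0) (0,1,0) = F3 p (0,1,0) (0,0,1) (0,1,0) :=
    symm3a p (0,0,1) (0,1,0) (0,1,0)
  have s3 : F2 p (0,1,0) (0,0,1) = F2 p (0,0,1) (0,1,0) := symm2 p (0,1,0) (0,0,1)
  rw [s1, s2] 
  rw [s3] at hEq'
  linear_combination (A p.1) * hEq'
end
end

section
/- Let u, q₁ : ℝ³ → ℝ be smooth (C^∞) functions of (t,x,y) with u_y nowhere zero, and suppose q₁ satisfies the covering equations q₁,t = u_x/u_y and q₁,x = 1/u_y at every point. Then q₁ satisfies the universal hierarchy equation q₁,xx = q₁,t·q₁,xy − q₁,x·q₁,ty at every point. -/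
noncomputable section

section Aux

lemma hasDerivAt_slice_x {f : ℝ × ℝ × ℝ → ℝ} (hf : Differentiable ℝ f) (p : ℝ × ℝ × ℝ) :
    HasDerivAt (fun s => f (p.1, s, p.2.2)) (fderiv ℝ f p ((0 : ℝ), (1 : ℝ), (0 : ℝ))) p.2.1 := by
  have hL : HasDerivAt (fun s : ℝ => ((p.1, s, p.2.2) : ℝ × ℝ × ℝ))
      ((0 : ℝ), (1 : ℝ), (0 : ℝ)) p.2.1 :=
    (hasDerivAt_const _ _).prodMk ((hasDerivAt_id _).prodMk (hasDerivAt_const _ _))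
  exact (hf p).hasFDerivAt.comp_hasDerivAt p.2.1 hL

lemma hasDerivAt_slice_y {f : ℝ × ℝ × ℝ → ℝ} (hf : Differentiable ℝ f) (p : ℝ × ℝ × ℝ) :
    HasDerivAt (fun s => f (p.1, p.2.1, s)) (fderiv ℝ f p ((0 : ℝ), (0 : ℝ), (1 : ℝ))) p.2.2 := by
  have hL : HasDerivAt (fun s : ℝ => ((p.1, p.2.1, s) : ℝ × ℝ × ℝ))
      ((0 : ℝ), (0 : ℝ), (1 : ℝ)) p.2.2 :=
    (hasDerivAt_const _ _).prodMk ((hasDerivAt_const _ _).prodMk (hasDerivAt_id _))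
  exact (hf p).hasFDerivAt.comp_hasDerivAt p.2.2 hL

end Aux

/-- if `q₁` satisfies the positive covering equations
`q₁,t = u_x/u_y`, `q₁,x = 1/u_y`, then `q₁` satisfies the universal hierarchy
equation `q₁,xx = q₁,t·q₁,xy − q₁,x·q₁,ty`. -/
theorem universal_hierarchy_of_covering (u q₁ : ℝ × ℝ × ℝ → ℝ)
    (hu : ContDiff ℝ (⊤ : ℕ∞) u) (hq : ContDiff ℝ (⊤ : ℕ∞) q₁)
    (huy : ∀ p, py u p ≠ 0)
    (hqt : ∀ p, pt q₁ p = px u p / py u p)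
    (hqx : ∀ p, px q₁ p = 1 / py u p) :
    ∀ p, px (px q₁) p = pt q₁ p * py (px q₁) p - px q₁ p * py (pt q₁) p := by
  intro p
  have hud : Differentiable ℝ u := hu.differentiable (by simp)
  set Ux : ℝ × ℝ × ℝ → ℝ := fun q => fderiv ℝ u q ((0:ℝ),(1:ℝ),(0:ℝ)) with hUx
  set Uy : ℝ × ℝ × ℝ → ℝ := fun q => fderiv ℝ u q ((0:ℝ),(0:ℝ),(1:ℝ)) with hUy
  have hfd : ContDiff ℝ (⊤ : ℕ∞) (fderiv ℝ u) := hu.fderiv_right (by simp)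
  have hUxc : Differentiable ℝ Ux := (hfd.clm_apply contDiff_const).differentiable (by simp)
  have hUyc : Differentiable ℝ Uy := (hfd.clm_apply contDiff_const).differentiable (by simp)
  have hpx : ∀ q, px u q = Ux q := fun q => (hasDerivAt_slice_x hud q).deriv
  have hpy : ∀ q, py u q = Uy q := fun q => (hasDerivAt_slice_y hud q).deriv
  have ha : Uy p ≠ 0 := by rw [← hpy]; exact huy p
  have hf'' : HasFDerivAt (fderiv ℝ u) (fderiv ℝ (fderiv ℝ u) p) p :=
    (hfd.differentiable (by simp) p).hasFDerivAt
  set f'' := fderiv ℝ (fderiv ℝ u) p with hf''def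
  have hsymm : ∀ v w, f'' v w = f'' w v := fun v w =>
    second_derivative_symmetric (fun q => (hud q).hasFDerivAt) hf'' v w
  have hdUx : ∀ v, fderiv ℝ Ux p v = f'' v ((0:ℝ),(1:ℝ),(0:ℝ)) := by
    intro v
    have h : HasFDerivAt Ux
        ((ContinuousLinearMap.apply ℝ ℝ ((0:ℝ),(1:ℝ),(0:ℝ))).comp f'') p :=
      (ContinuousLinearMap.apply ℝ ℝ ((0:ℝ),(1:ℝ),(0:ℝ))).hasFDerivAt.comp p hf''
    rw [h.fderiv]; rfl
  have hdUy : ∀ v, fderiv ℝ Uy p v = f'' v ((0:ℝ),(0:ℝ),(1:ℝ)) := by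
    intro v
    have h : HasFDerivAt Uy
        ((ContinuousLinearMap.apply ℝ ℝ ((0:ℝ),(0:ℝ),(1:ℝ))).comp f'') p :=
      (ContinuousLinearMap.apply ℝ ℝ ((0:ℝ),(0:ℝ),(1:ℝ))).hasFDerivAt.comp p hf''
    rw [h.fderiv]; rfl
  -- compute px (px q₁) p
  have hxx : px (px q₁) p = -f'' ((0:ℝ),(1:ℝ),(0:ℝ)) ((0:ℝ),(0:ℝ),(1:ℝ)) / Uy p ^ 2 := by
    have hcong : (fun s => px q₁ (p.1, s, p.2.2)) = fun s => (Uy (p.1, s, p.2.2))⁻¹ := by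
      funext s; rw [hqx, hpy, one_div]
    have hD : HasDerivAt (fun s => Uy (p.1, s, p.2.2)) (fderiv ℝ Uy p ((0:ℝ),(1:ℝ),(0:ℝ))) p.2.1 :=
      hasDerivAt_slice_x hUyc p
    have h2 : deriv (fun s => (Uy (p.1, s, p.2.2))⁻¹) p.2.1 = _ := (hD.inv ha).deriv
    show deriv (fun s => px q₁ (p.1, s, p.2.2)) p.2.1 = _
    rw [hcong, h2, hdUy]
  -- compute py (px q₁) p
  have hxy : py (px q₁) p = -f'' ((0:ℝ),(0:ℝ),(1:ℝ)) ((0:ℝ),(0:ℝ),(1:ℝ)) / Uy p ^ 2 := by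
    have hcong : (fun s => px q₁ (p.1, p.2.1, s)) = fun s => (Uy (p.1, p.2.1, s))⁻¹ := by
      funext s; rw [hqx, hpy, one_div]
    have hD : HasDerivAt (fun s => Uy (p.1, p.2.1, s)) (fderiv ℝ Uy p ((0:ℝ),(0:ℝ),(1:ℝ))) p.2.2 :=
      hasDerivAt_slice_y hUyc p
    have h2 : deriv (fun s => (Uy (p.1, p.2.1, s))⁻¹) p.2.2 = _ := (hD.inv ha).deriv
    show deriv (fun s => px q₁ (p.1, p.2.1, s)) p.2.2 = _
    rw [hcong, h2, hdUy]
  -- compute py (pt q₁) p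
  have hty : py (pt q₁) p =
      (f'' ((0:ℝ),(0:ℝ),(1:ℝ)) ((0:ℝ),(1:ℝ),(0:ℝ)) * Uy p
        - Ux p * f'' ((0:ℝ),(0:ℝ),(1:ℝ)) ((0:ℝ),(0:ℝ),(1:ℝ))) / Uy p ^ 2 := by
    have hcong : (fun s => pt q₁ (p.1, p.2.1, s))
        = fun s => Ux (p.1, p.2.1, s) / Uy (p.1, p.2.1, s) := by
      funext s; rw [hqt, hpx, hpy]
    have hDx : HasDerivAt (fun s => Ux (p.1, p.2.1, s)) (fderiv ℝ Ux p ((0:ℝ),(0:ℝ),(1:ℝ))) p.2.2 :=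
      hasDerivAt_slice_y hUxc p
    have hDy : HasDerivAt (fun s => Uy (p.1, p.2.1, s)) (fderiv ℝ Uy p ((0:ℝ),(0:ℝ),(1:ℝ))) p.2.2 :=
      hasDerivAt_slice_y hUyc p
    have h2 : deriv (fun s => Ux (p.1, p.2.1, s) / Uy (p.1, p.2.1, s)) p.2.2 = _ :=
      (hDx.div hDy ha).deriv
    show deriv (fun s => pt q₁ (p.1, p.2.1, s)) p.2.2 = _
    rw [hcong, h2, hdUx, hdUy]
  rw [hxx, hxy, hty, hqt p, hqx p, hpx, hpy,
    hsymm ((0:ℝ),(1:ℝ),(0:ℝ)) ((0:ℝ),(0:ℝ),(1:ℝ))]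
  field_simp
  ring
end
end

section
/- Let u, q₁ : ℝ³ → ℝ be smooth (C^∞) functions of (t,x,y) with u_y nowhere zero. Suppose u satisfies the 3D rdDym equation u_ty = u_x·u_xy − u_y·u_xx and q₁ satisfies the covering equations q₁,t = u_x/u_y and q₁,x = 1/u_y at every point. Then the function v = q₁·u_y + x satisfies the linearized equation v_ty − u_x·v_xy + u_y·v_xx − u_xy·v_x + u_xx·v_y = 0 everywhere (i.e., v is a nonlocal shadow in the positive covering). -/
noncomputable section

def pd (v : ℝ × ℝ × ℝ) (f : ℝ × ℝ × ℝ → ℝ) : ℝ × ℝ × ℝ → ℝ :=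
  fun p => fderiv ℝ f p v

lemma pt_eq {f : ℝ × ℝ × ℝ → ℝ} (hf : Differentiable ℝ f) : pt f = pd (1,0,0) f := by
  funext p
  exact ((hf p).hasFDerivAt.comp_hasDerivAt p.1
    (HasDerivAt.prodMk (hasDerivAt_id p.1) (HasDerivAt.prodMk (hasDerivAt_const _ _) (hasDerivAt_const _ _)))).deriv

lemma px_eq {f : ℝ × ℝ × ℝ → ℝ} (hf : Differentiable ℝ f) : px f = pd (0,1,0) f := by
  funext p
  exact ((hf p).hasFDerivAt.comp_hasDerivAt p.2.1
    (HasDerivAt.prodMk (hasDerivAt_const _ _) (HasDerivAt.prodMk (hasDerivAt_id p.2.1) (hasDerivAt_const _ _)))).deriv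

lemma py_eq {f : ℝ × ℝ × ℝ → ℝ} (hf : Differentiable ℝ f) : py f = pd (0,0,1) f := by
  funext p
  exact ((hf p).hasFDerivAt.comp_hasDerivAt p.2.2
    (HasDerivAt.prodMk (hasDerivAt_const _ _) (HasDerivAt.prodMk (hasDerivAt_const _ _) (hasDerivAt_id p.2.2)))).deriv

lemma pd_contDiff {f : ℝ × ℝ × ℝ → ℝ} (hf : ContDiff ℝ (⊤ : ℕ∞) f) (v : ℝ × ℝ × ℝ) :
    ContDiff ℝ (⊤ : ℕ∞) (pd v f) :=
  (hf.fderiv_right (by simp)).clm_apply contDiff_const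

lemma pd_comm {f : ℝ × ℝ × ℝ → ℝ} (hf : ContDiff ℝ (⊤ : ℕ∞) f) (v w : ℝ × ℝ × ℝ) :
    pd v (pd w f) = pd w (pd v f) := by
  funext p
  have hd : Differentiable ℝ (fderiv ℝ f) := (hf.fderiv_right (m := (⊤ : ℕ∞)) (by simp)).differentiable (by simp)
  have key : ∀ z a : ℝ × ℝ × ℝ, pd a (pd z f) p = fderiv ℝ (fderiv ℝ f) p a z := by
    intro z a
    show fderiv ℝ (fun q => fderiv ℝ f q z) p a = _
    rw [fderiv_clm_apply (hd p) (differentiableAt_const z)]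
    simp
  rw [key, key]
  exact hf.contDiffAt.isSymmSndFDerivAt (by rw [minSmoothness_of_isRCLikeNormedField]; exact WithTop.coe_le_coe.mpr le_top) v w

lemma pd_add {f g : ℝ × ℝ × ℝ → ℝ} (hf : Differentiable ℝ f) (hg : Differentiable ℝ g)
    (v : ℝ × ℝ × ℝ) :
    pd v (fun p => f p + g p) = fun p => pd v f p + pd v g p := by
  funext p
  simp only [pd]
  rw [fderiv_fun_add (hf p) (hg p)]
  simp

lemma pd_sub {f g : ℝ × ℝ × ℝ → ℝ} (hf : Differentiable ℝ f) (hg : Differentiable ℝ g)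
    (v : ℝ × ℝ × ℝ) :
    pd v (fun p => f p - g p) = fun p => pd v f p - pd v g p := by
  funext p
  simp only [pd]
  rw [fderiv_fun_sub (hf p) (hg p)]
  simp

lemma pd_mul {f g : ℝ × ℝ × ℝ → ℝ} (hf : Differentiable ℝ f) (hg : Differentiable ℝ g)
    (v : ℝ × ℝ × ℝ) :
    pd v (fun p => f p * g p) = fun p => pd v f p * g p + f p * pd v g p := by
  funext p
  simp only [pd]
  rw [fderiv_fun_mul (hf p) (hg p)]
  simp
  ring

lemma pd_const (c : ℝ) (v : ℝ × ℝ × ℝ) : pd v (fun _ => c) = fun _ => 0 := by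
  funext p; simp [pd]

lemma pd_snd_fst (v : ℝ × ℝ × ℝ) : pd v (fun p : ℝ × ℝ × ℝ => p.2.1) = fun _ => v.2.1 := by
  funext p
  have h : (fun p : ℝ × ℝ × ℝ => p.2.1)
      = ((ContinuousLinearMap.fst ℝ ℝ ℝ).comp (ContinuousLinearMap.snd ℝ ℝ (ℝ × ℝ)) :
        ℝ × ℝ × ℝ →L[ℝ] ℝ) := rfl
  simp only [pd, h]
  rw [ContinuousLinearMap.fderiv]
  rfl

/-- `ψ₋₁ = q₁·u_y + x` is a shadow in the positive covering. -/
theorem shadow_psi_minus_one (u q₁ : ℝ × ℝ × ℝ → ℝ)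
    (hu : ContDiff ℝ (⊤ : ℕ∞) u) (hq : ContDiff ℝ (⊤ : ℕ∞) q₁)
    (huy : ∀ p, py u p ≠ 0) (heq : rdDym u)
    (hqt : ∀ p, pt q₁ p = px u p / py u p)
    (hqx : ∀ p, px q₁ p = 1 / py u p) :
    linearized u (fun p => q₁ p * py u p + p.2.1) := by
  have hud : Differentiable ℝ u := hu.differentiable (by simp)
  have hqd : Differentiable ℝ q₁ := hq.differentiable (by simp)
  have hB : ContDiff ℝ (⊤ : ℕ∞) (pd (0,0,1) u) := pd_contDiff hu _
  have hA : ContDiff ℝ (⊤ : ℕ∞) (pd (0,1,0) u) := pd_contDiff hu _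
  have hC : ContDiff ℝ (⊤ : ℕ∞) (pd (0,0,1) (pd (0,1,0) u)) := pd_contDiff hA _
  have hD : ContDiff ℝ (⊤ : ℕ∞) (pd (0,1,0) (pd (0,1,0) u)) := pd_contDiff hA _
  have hBd : Differentiable ℝ (pd (0,0,1) u) := hB.differentiable (by simp)
  have hAd : Differentiable ℝ (pd (0,1,0) u) := hA.differentiable (by simp)
  have hCd : Differentiable ℝ (pd (0,0,1) (pd (0,1,0) u)) := hC.differentiable (by simp)
  have hDd : Differentiable ℝ (pd (0,1,0) (pd (0,1,0) u)) := hD.differentiable (by simp)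
  have hb : ∀ p, pd (0,0,1) u p ≠ 0 := by
    intro p; have h := huy p; rwa [py_eq hud] at h
  have hq1t : pd (1,0,0) q₁ = fun p => pd (0,1,0) u p / pd (0,0,1) u p := by
    rw [← pt_eq hqd]; funext p; rw [hqt p, px_eq hud, py_eq hud]
  have hq1x : pd (0,1,0) q₁ = fun p => 1 / pd (0,0,1) u p := by
    rw [← px_eq hqd]; funext p; rw [hqx p, py_eq hud]
  have hptu : pd (0,0,1) (pd (1,0,0) u)
      = fun p => pd (0,1,0) u p * pd (0,0,1) (pd (0,1,0) u) p
          - pd (0,0,1) u p * pd (0,1,0) (pd (0,1,0) u) p := by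
    funext p
    have h := heq p
    rw [pt_eq hud, px_eq hud, py_eq hud,
        py_eq ((pd_contDiff hu (1,0,0)).differentiable (by simp)),
        py_eq hAd, px_eq hAd] at h
    exact h
  unfold linearized
  rw [py_eq hud, px_eq hud]
  have hV : ContDiff ℝ (⊤ : ℕ∞) (fun p : ℝ × ℝ × ℝ => q₁ p * pd (0,0,1) u p + p.2.1) :=
    (hq.mul hB).add contDiff_snd.fst
  have hVd : Differentiable ℝ (fun p : ℝ × ℝ × ℝ => q₁ p * pd (0,0,1) u p + p.2.1) :=
    hV.differentiable (by simp)
  rw [pt_eq hVd, px_eq hVd, py_eq hVd,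
      py_eq ((pd_contDiff hV (1,0,0)).differentiable (by simp)),
      py_eq ((pd_contDiff hV (0,1,0)).differentiable (by simp)),
      px_eq ((pd_contDiff hV (0,1,0)).differentiable (by simp)),
      py_eq hAd, px_eq hAd]
  have hQB : Differentiable ℝ (fun p : ℝ × ℝ × ℝ => q₁ p * pd (0,0,1) u p) := hqd.mul hBd
  have hX : Differentiable ℝ (fun p : ℝ × ℝ × ℝ => p.2.1) :=
    (contDiff_snd.fst : ContDiff ℝ (⊤ : ℕ∞) (fun p : ℝ × ℝ × ℝ => p.2.1)).differentiable (by simp)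
  have hsplit : ∀ v : ℝ × ℝ × ℝ, pd v (fun p => q₁ p * pd (0,0,1) u p + p.2.1)
      = fun p => pd v q₁ p * pd (0,0,1) u p + q₁ p * pd v (pd (0,0,1) u) p + v.2.1 := by
    intro v
    rw [pd_add hQB hX v, pd_mul hqd hBd v, pd_snd_fst v]
  have h1 : pd (1,0,0) (fun p => q₁ p * pd (0,0,1) u p + p.2.1)
      = fun p => pd (0,1,0) u p
          + q₁ p * (pd (0,1,0) u p * pd (0,0,1) (pd (0,1,0) u) p
              - pd (0,0,1) u p * pd (0,1,0) (pd (0,1,0) u) p) := by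
    rw [hsplit, hq1t, pd_comm hu (1,0,0) (0,0,1), hptu]
    funext p
    field_simp [hb p]
    ring
  have h2 : pd (0,1,0) (fun p => q₁ p * pd (0,0,1) u p + p.2.1)
      = fun p => q₁ p * pd (0,0,1) (pd (0,1,0) u) p + 2 := by
    rw [hsplit, hq1x, pd_comm hu (0,1,0) (0,0,1)]
    funext p
    field_simp [hb p]
    ring
  have h3 : pd (0,0,1) (fun p => q₁ p * pd (0,0,1) u p + p.2.1)
      = fun p => pd (0,0,1) q₁ p * pd (0,0,1) u p + q₁ p * pd (0,0,1) (pd (0,0,1) u) p := by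
    rw [hsplit]
    funext p
    simp
  rw [h1, h2, h3]
  have hW : Differentiable ℝ (fun p : ℝ × ℝ × ℝ =>
      pd (0,1,0) u p * pd (0,0,1) (pd (0,1,0) u) p
        - pd (0,0,1) u p * pd (0,1,0) (pd (0,1,0) u) p) :=
    (hAd.mul hCd).sub (hBd.mul hDd)
  simp only [pd_add hAd (hqd.fun_mul hW), pd_mul hqd hW,
    pd_sub (hAd.fun_mul hCd) (hBd.fun_mul hDd), pd_mul hAd hCd, pd_mul hBd hDd,
    pd_add (hqd.fun_mul hCd) (differentiable_const (2:ℝ)), pd_mul hqd hCd, pd_const]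
  rw [pd_comm hA (0,1,0) (0,0,1), hq1x]
  intro p
  field_simp [hb p]
  ring
end
end

section
/- Let u, r₁, r₂ : ℝ³ → ℝ be smooth (C^∞) functions of (t,x,y). Suppose u satisfies the 3D rdDym equation u_ty = u_x·u_xy − u_y·u_xx, r₁ satisfies r₁,x = u_x² − u_t and r₁,y = u_x·u_y, and r₂ satisfies r₂,x = u_x·r₁,x − r₁,t and r₂,y = u_y·r₁,x at every point. Then the function v = 4·r₂ + x·r₁,t + 2·u·u_t − (x·u_t + 3·r₁)·u_x satisfies the linearized equation v_ty − u_x·v_xy + u_y·v_xx − u_xy·v_x + u_xx·v_y = 0 everywhere (i.e., v is a nonlocal shadow in the negative covering). -/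
noncomputable section

variable {f : ℝ × ℝ × ℝ → ℝ}

lemma diff_sliceT (hf : ContDiff ℝ (⊤ : ℕ∞) f) (a b s : ℝ) :
    DifferentiableAt ℝ (fun s => f (s, a, b)) s := by
  have : Differentiable ℝ (fun s : ℝ => f (s, a, b)) :=
    (hf.differentiable (by simp)).comp (differentiable_id.prodMk (differentiable_const _))
  exact this s

lemma diff_sliceX (hf : ContDiff ℝ (⊤ : ℕ∞) f) (a b s : ℝ) :
    DifferentiableAt ℝ (fun s => f (a, s, b)) s := by
  have : Differentiable ℝ (fun s : ℝ => f (a, s, b)) :=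
    (hf.differentiable (by simp)).comp
      ((differentiable_const _).prodMk (differentiable_id.prodMk (differentiable_const _)))
  exact this s

lemma diff_sliceY (hf : ContDiff ℝ (⊤ : ℕ∞) f) (a b s : ℝ) :
    DifferentiableAt ℝ (fun s => f (a, b, s)) s := by
  have : Differentiable ℝ (fun s : ℝ => f (a, b, s)) :=
    (hf.differentiable (by simp)).comp
      ((differentiable_const _).prodMk ((differentiable_const _).prodMk differentiable_id))
  exact this s

lemma sliceT (hf : ContDiff ℝ (⊤ : ℕ∞) f) (q : ℝ × ℝ × ℝ) :
    HasDerivAt (fun s => f (s, q.2.1, q.2.2)) (pt f q) q.1 :=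
  (diff_sliceT hf q.2.1 q.2.2 q.1).hasDerivAt

lemma sliceX (hf : ContDiff ℝ (⊤ : ℕ∞) f) (q : ℝ × ℝ × ℝ) :
    HasDerivAt (fun s => f (q.1, s, q.2.2)) (px f q) q.2.1 :=
  (diff_sliceX hf q.1 q.2.2 q.2.1).hasDerivAt

lemma sliceY (hf : ContDiff ℝ (⊤ : ℕ∞) f) (q : ℝ × ℝ × ℝ) :
    HasDerivAt (fun s => f (q.1, q.2.1, s)) (py f q) q.2.2 :=
  (diff_sliceY hf q.1 q.2.1 q.2.2).hasDerivAt

lemma pt_fd (hf : ContDiff ℝ (⊤ : ℕ∞) f) (q : ℝ × ℝ × ℝ) :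
    pt f q = fderiv ℝ f q ((1:ℝ), (0:ℝ), (0:ℝ)) := by
  have hc : HasDerivAt (fun s : ℝ => ((s, q.2.1, q.2.2) : ℝ × ℝ × ℝ))
      ((1:ℝ), (0:ℝ), (0:ℝ)) q.1 :=
    (hasDerivAt_id q.1).prodMk (hasDerivAt_const _ _)
  have hl : HasFDerivAt f (fderiv ℝ f q) ((q.1, q.2.1, q.2.2) : ℝ × ℝ × ℝ) :=
    ((hf.differentiable (by simp)) q).hasFDerivAt
  simpa [pt, Function.comp_def] using (hl.comp_hasDerivAt q.1 hc).deriv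

lemma px_fd (hf : ContDiff ℝ (⊤ : ℕ∞) f) (q : ℝ × ℝ × ℝ) :
    px f q = fderiv ℝ f q ((0:ℝ), (1:ℝ), (0:ℝ)) := by
  have hc : HasDerivAt (fun s : ℝ => ((q.1, s, q.2.2) : ℝ × ℝ × ℝ))
      ((0:ℝ), (1:ℝ), (0:ℝ)) q.2.1 :=
    (hasDerivAt_const _ _).prodMk ((hasDerivAt_id q.2.1).prodMk (hasDerivAt_const _ _))
  have hl : HasFDerivAt f (fderiv ℝ f q) ((q.1, q.2.1, q.2.2) : ℝ × ℝ × ℝ) :=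
    ((hf.differentiable (by simp)) q).hasFDerivAt
  simpa [px, Function.comp_def] using (hl.comp_hasDerivAt q.2.1 hc).deriv

lemma py_fd (hf : ContDiff ℝ (⊤ : ℕ∞) f) (q : ℝ × ℝ × ℝ) :
    py f q = fderiv ℝ f q ((0:ℝ), (0:ℝ), (1:ℝ)) := by
  have hc : HasDerivAt (fun s : ℝ => ((q.1, q.2.1, s) : ℝ × ℝ × ℝ))
      ((0:ℝ), (0:ℝ), (1:ℝ)) q.2.2 :=
    (hasDerivAt_const _ _).prodMk ((hasDerivAt_const _ _).prodMk (hasDerivAt_id q.2.2))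
  have hl : HasFDerivAt f (fderiv ℝ f q) ((q.1, q.2.1, q.2.2) : ℝ × ℝ × ℝ) :=
    ((hf.differentiable (by simp)) q).hasFDerivAt
  simpa [py, Function.comp_def] using (hl.comp_hasDerivAt q.2.2 hc).deriv

lemma contDiff_fd (hf : ContDiff ℝ (⊤ : ℕ∞) f) (e : ℝ × ℝ × ℝ) :
    ContDiff ℝ (⊤ : ℕ∞) (fun q => fderiv ℝ f q e) :=
  (hf.fderiv_right (by simp)).clm_apply contDiff_const

lemma contDiff_pt_s10 (hf : ContDiff ℝ (⊤ : ℕ∞) f) : ContDiff ℝ (⊤ : ℕ∞) (pt f) := by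
  have : pt f = fun q => fderiv ℝ f q ((1:ℝ), (0:ℝ), (0:ℝ)) := funext (pt_fd hf)
  rw [this]; exact contDiff_fd hf _

lemma contDiff_px_s10 (hf : ContDiff ℝ (⊤ : ℕ∞) f) : ContDiff ℝ (⊤ : ℕ∞) (px f) := by
  have : px f = fun q => fderiv ℝ f q ((0:ℝ), (1:ℝ), (0:ℝ)) := funext (px_fd hf)
  rw [this]; exact contDiff_fd hf _

lemma contDiff_py_s10 (hf : ContDiff ℝ (⊤ : ℕ∞) f) : ContDiff ℝ (⊤ : ℕ∞) (py f) := by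
  have : py f = fun q => fderiv ℝ f q ((0:ℝ), (0:ℝ), (1:ℝ)) := funext (py_fd hf)
  rw [this]; exact contDiff_fd hf _

lemma fd_comm (hf : ContDiff ℝ (⊤ : ℕ∞) f) (q : ℝ × ℝ × ℝ) (e e' : ℝ × ℝ × ℝ) :
    fderiv ℝ (fun x => fderiv ℝ f x e) q e' = fderiv ℝ (fun x => fderiv ℝ f x e') q e := by
  have h1 : ∀ y, HasFDerivAt f (fderiv ℝ f y) y := fun y =>
    ((hf.differentiable (by simp)) y).hasFDerivAt
  have h2 : HasFDerivAt (fderiv ℝ f) (fderiv ℝ (fderiv ℝ f) q) q :=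
    (((hf.fderiv_right (m := 1) (WithTop.coe_le_coe.mpr le_top)).differentiable (by simp)) q).hasFDerivAt
  have hd : DifferentiableAt ℝ (fderiv ℝ f) q :=
    ((hf.fderiv_right (m := 1) (WithTop.coe_le_coe.mpr le_top)).differentiable (by simp)) q
  have e1 : fderiv ℝ (fun x => fderiv ℝ f x e) q e' = fderiv ℝ (fderiv ℝ f) q e' e := by
    rw [fderiv_clm_apply hd (differentiableAt_const e)]
    simp
  have e2 : fderiv ℝ (fun x => fderiv ℝ f x e') q e = fderiv ℝ (fderiv ℝ f) q e e' := by
    rw [fderiv_clm_apply hd (differentiableAt_const e')]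
    simp
  rw [e1, e2]
  exact (second_derivative_symmetric h1 h2 e' e)

lemma pt_px_comm (hf : ContDiff ℝ (⊤ : ℕ∞) f) (q : ℝ × ℝ × ℝ) : pt (px f) q = px (pt f) q := by
  rw [pt_fd (contDiff_px_s10 hf) q, px_fd (contDiff_pt_s10 hf) q,
    funext (px_fd hf), funext (pt_fd hf)]
  exact fd_comm hf q _ _

lemma pt_py_comm (hf : ContDiff ℝ (⊤ : ℕ∞) f) (q : ℝ × ℝ × ℝ) : pt (py f) q = py (pt f) q := by
  rw [pt_fd (contDiff_py_s10 hf) q, py_fd (contDiff_pt_s10 hf) q,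
    funext (py_fd hf), funext (pt_fd hf)]
  exact fd_comm hf q _ _

lemma px_py_comm (hf : ContDiff ℝ (⊤ : ℕ∞) f) (q : ℝ × ℝ × ℝ) : px (py f) q = py (px f) q := by
  rw [px_fd (contDiff_py_s10 hf) q, py_fd (contDiff_px_s10 hf) q,
    funext (py_fd hf), funext (px_fd hf)]
  exact fd_comm hf q _ _

/-- `ψ₂ = 4r₂ + x·r₁,t + 2u·u_t − (x·u_t + 3r₁)·u_x` is a shadow
in the negative covering. -/
theorem shadow_psi_two (u r₁ r₂ : ℝ × ℝ × ℝ → ℝ)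
    (hu : ContDiff ℝ (⊤ : ℕ∞) u) (hr₁ : ContDiff ℝ (⊤ : ℕ∞) r₁) (hr₂ : ContDiff ℝ (⊤ : ℕ∞) r₂)
    (heq : rdDym u)
    (hr₁x : ∀ p, px r₁ p = px u p ^ 2 - pt u p)
    (hr₁y : ∀ p, py r₁ p = px u p * py u p)
    (hr₂x : ∀ p, px r₂ p = px u p * px r₁ p - pt r₁ p)
    (hr₂y : ∀ p, py r₂ p = py u p * px r₁ p) :
    linearized u (fun p =>
      4 * r₂ p + p.2.1 * pt r₁ p + 2 * u p * pt u p
        - (p.2.1 * pt u p + 3 * r₁ p) * px u p) := by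
  have heq' : ∀ p, py (pt u) p = px u p * py (px u) p - py u p * px (px u) p := heq
  have hut := contDiff_pt_s10 hu
  have hux := contDiff_px_s10 hu
  have huy := contDiff_py_s10 hu
  have hutx := contDiff_px_s10 hut
  have hutt := contDiff_pt_s10 hut
  have huxx := contDiff_px_s10 hux
  have huxy := contDiff_py_s10 hux
  have hr1t := contDiff_pt_s10 hr₁
  have C1f : pt (px u) = px (pt u) := funext (pt_px_comm hu)
  have Q1 : ∀ q, px (pt r₁) q = 2 * px u q * px (pt u) q - pt (pt u) q := by
    intro q
    rw [← pt_px_comm hr₁ q]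
    have hfe : px r₁ = fun p => px u p * px u p - pt u p := by
      funext p; rw [hr₁x p]; ring
    rw [hfe]
    have HQ1 := (((sliceT hux q).mul (sliceT hux q)).sub (sliceT hut q))
    have hvalQ1 : pt (fun p => px u p * px u p - pt u p) q = ((pt (px u) q * px u q + px u q * pt (px u) q) - pt (pt u) q) := HQ1.deriv
    rw [hvalQ1, pt_px_comm hu q]; ring
  have Q2 : ∀ q, py (pt r₁) q = px (pt u) q * py u q + px u q * (px u q * py (px u) q - py u q * px (px u) q) := by
    intro q
    rw [← pt_py_comm hr₁ q]
    have hfe : py r₁ = fun p => px u p * py u p := funext hr₁y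
    rw [hfe]
    have HQ2 := ((sliceT hux q).mul (sliceT huy q))
    have hvalQ2 : pt (fun p => px u p * py u p) q = (pt (px u) q * py u q + px u q * pt (py u) q) := HQ2.deriv
    rw [hvalQ2]
    simp only [pt_px_comm hu, pt_py_comm hu, heq']
  have hfeq : py (pt u) = fun p => px u p * py (px u) p - py u p * px (px u) p := funext heq'
  have Q3 : ∀ q, px (py (pt u)) q = px u q * py (px (px u)) q - py u q * px (px (px u)) q := by
    intro q
    rw [hfeq]
    have HQ3 := (((sliceX hux q).mul (sliceX huxy q)).sub ((sliceX huy q).mul (sliceX huxx q)))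
    have hvalQ3 : px (fun p => px u p * py (px u) p - py u p * px (px u) p) q = ((px (px u) q * py (px u) q + px u q * px (py (px u)) q) - (px (py u) q * px (px u) q + py u q * px (px (px u)) q)) := HQ3.deriv
    rw [hvalQ3]
    simp only [px_py_comm hux, px_py_comm hu]
    ring
  have Q4 : ∀ q, py (pt (pt u)) q = px (pt u) q * py (px u) q + px u q * (px u q * py (px (px u)) q - py u q * px (px (px u)) q) - (px u q * py (px u) q - py u q * px (px u) q) * px (px u) q - py u q * px (px (pt u)) q := by
    intro q
    rw [← pt_py_comm hut q, hfeq]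
    have HQ4 := (((sliceT hux q).mul (sliceT huxy q)).sub ((sliceT huy q).mul (sliceT huxx q)))
    have hvalQ4 : pt (fun p => px u p * py (px u) p - py u p * px (px u) p) q = ((pt (px u) q * py (px u) q + px u q * pt (py (px u)) q) - (pt (py u) q * px (px u) q + py u q * pt (px (px u)) q)) := HQ4.deriv
    rw [hvalQ4]
    simp only [pt_px_comm hu, pt_py_comm hux, C1f, ← px_py_comm hut, Q3, pt_py_comm hu, heq', pt_px_comm hux]
    ring
  have hvx' : ∀ q, px (fun p => 4 * r₂ p + p.2.1 * pt r₁ p + 2 * u p * pt u p - (p.2.1 * pt u p + 3 * r₁ p) * px u p) q = ((((((((q.2.1 * px u q) * px (pt u) q) - ((q.2.1 * px (px u) q) * pt u q)) - (q.2.1 * pt (pt u) q)) - (3 * (r₁ q * px (px u) q))) - (3 * pt r₁ q)) + (2 * (u q * px (pt u) q))) + ((px u q * px u q) * px u q)) := by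
    intro q
    have Hvx := (((((sliceX hr₂ q).const_mul (4:ℝ)).add ((hasDerivAt_id' (q.2.1)).mul (sliceX hr1t q))).add (((sliceX hu q).const_mul (2:ℝ)).mul (sliceX hut q))).sub ((((hasDerivAt_id' (q.2.1)).mul (sliceX hut q)).add ((sliceX hr₁ q).const_mul (3:ℝ))).mul (sliceX hux q)))
    have hvalvx : px (fun p => 4 * r₂ p + p.2.1 * pt r₁ p + 2 * u p * pt u p - (p.2.1 * pt u p + 3 * r₁ p) * px u p) q = ((((4 * (px (r₂) q)) + (1 * pt r₁ q + q.2.1 * px (pt r₁) q)) + ((2 * (px (u) q)) * pt u q + (2 * u q) * px (pt u) q)) - (((1 * pt u q + q.2.1 * px (pt u) q) + (3 * (px (r₁) q))) * px u q + ((q.2.1 * pt u q) + (3 * r₁ q)) * px (px u) q)) := Hvx.deriv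
    rw [hvalvx]
    simp only [heq', hr₁x, hr₁y, hr₂x, hr₂y, Q1, Q2, Q3, Q4, C1f, pt_px_comm hu, pt_py_comm hu, px_py_comm hu, pt_px_comm hux, pt_py_comm hux, px_py_comm hux, pt_px_comm hut, ← px_py_comm hut]
    ring
  have hvy' : ∀ q, py (fun p => 4 * r₂ p + p.2.1 * pt r₁ p + 2 * u p * pt u p - (p.2.1 * pt u p + 3 * r₁ p) * px u p) q = ((((((((q.2.1 * py u q) * px (pt u) q) - ((q.2.1 * py (px u) q) * pt u q)) - (3 * (r₁ q * py (px u) q))) - (2 * ((u q * py u q) * px (px u) q))) + (2 * ((u q * px u q) * py (px u) q))) + ((py u q * px u q) * px u q)) - (2 * (py u q * pt u q))) := by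
    intro q
    have Hvy := (((((sliceY hr₂ q).const_mul (4:ℝ)).add ((hasDerivAt_const q.2.2 q.2.1).mul (sliceY hr1t q))).add (((sliceY hu q).const_mul (2:ℝ)).mul (sliceY hut q))).sub ((((hasDerivAt_const q.2.2 q.2.1).mul (sliceY hut q)).add ((sliceY hr₁ q).const_mul (3:ℝ))).mul (sliceY hux q)))
    have hvalvy : py (fun p => 4 * r₂ p + p.2.1 * pt r₁ p + 2 * u p * pt u p - (p.2.1 * pt u p + 3 * r₁ p) * px u p) q = ((((4 * (py (r₂) q)) + (0 * pt r₁ q + q.2.1 * py (pt r₁) q)) + ((2 * (py (u) q)) * pt u q + (2 * u q) * py (pt u) q)) - (((0 * pt u q + q.2.1 * py (pt u) q) + (3 * (py (r₁) q))) * px u q + ((q.2.1 * pt u q) + (3 * r₁ q)) * py (px u) q)) := Hvy.deriv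
    rw [hvalvy]
    simp only [heq', hr₁x, hr₁y, hr₂x, hr₂y, Q1, Q2, Q3, Q4, C1f, pt_px_comm hu, pt_py_comm hu, px_py_comm hu, pt_px_comm hux, pt_py_comm hux, px_py_comm hux, pt_px_comm hut, ← px_py_comm hut]
    ring
  have hX : ContDiff ℝ (⊤ : ℕ∞) (fun p : ℝ × ℝ × ℝ => p.2.1) := contDiff_snd.fst
  have hv : ContDiff ℝ (⊤ : ℕ∞) (fun p => 4 * r₂ p + p.2.1 * pt r₁ p + 2 * u p * pt u p - (p.2.1 * pt u p + 3 * r₁ p) * px u p) :=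
    (((contDiff_const.mul hr₂).add (hX.mul hr1t)).add ((contDiff_const.mul hu).mul hut)).sub
      (((hX.mul hut).add (contDiff_const.mul hr₁)).mul hux)
  have hvxf : px (fun p => 4 * r₂ p + p.2.1 * pt r₁ p + 2 * u p * pt u p - (p.2.1 * pt u p + 3 * r₁ p) * px u p) = fun q => ((((((((q.2.1 * px u q) * px (pt u) q) - ((q.2.1 * px (px u) q) * pt u q)) - (q.2.1 * pt (pt u) q)) - (3 * (r₁ q * px (px u) q))) - (3 * pt r₁ q)) + (2 * (u q * px (pt u) q))) + ((px u q * px u q) * px u q)) := funext hvx'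
  have hvyf : py (fun p => 4 * r₂ p + p.2.1 * pt r₁ p + 2 * u p * pt u p - (p.2.1 * pt u p + 3 * r₁ p) * px u p) = fun q => ((((((((q.2.1 * py u q) * px (pt u) q) - ((q.2.1 * py (px u) q) * pt u q)) - (3 * (r₁ q * py (px u) q))) - (2 * ((u q * py u q) * px (px u) q))) + (2 * ((u q * px u q) * py (px u) q))) + ((py u q * px u q) * px u q)) - (2 * (py u q * pt u q))) := funext hvy'
  intro p
  rw [← pt_py_comm hv p, hvxf, hvyf]
  beta_reduce
  have Hxx := (((((((((hasDerivAt_id' (p.2.1)).mul (sliceX hux p)).mul (sliceX hutx p)).sub (((hasDerivAt_id' (p.2.1)).mul (sliceX huxx p)).mul (sliceX hut p))).sub ((hasDerivAt_id' (p.2.1)).mul (sliceX hutt p))).sub (((sliceX hr₁ p).mul (sliceX huxx p)).const_mul (3:ℝ))).sub ((sliceX hr1t p).const_mul (3:ℝ))).add (((sliceX hu p).mul (sliceX hutx p)).const_mul (2:ℝ))).add (((sliceX hux p).mul (sliceX hux p)).mul (sliceX hux p)))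
  have hvalxx : px (fun q => ((((((((q.2.1 * px u q) * px (pt u) q) - ((q.2.1 * px (px u) q) * pt u q)) - (q.2.1 * pt (pt u) q)) - (3 * (r₁ q * px (px u) q))) - (3 * pt r₁ q)) + (2 * (u q * px (pt u) q))) + ((px u q * px u q) * px u q))) p = ((((((((1 * px u p + p.2.1 * px (px u) p) * px (pt u) p + (p.2.1 * px u p) * px (px (pt u)) p) - ((1 * px (px u) p + p.2.1 * px (px (px u)) p) * pt u p + (p.2.1 * px (px u) p) * px (pt u) p)) - (1 * pt (pt u) p + p.2.1 * px (pt (pt u)) p)) - (3 * ((px (r₁) p * px (px u) p + r₁ p * px (px (px u)) p)))) - (3 * (px (pt r₁) p))) + (2 * ((px (u) p * px (pt u) p + u p * px (px (pt u)) p)))) + ((px (px u) p * px u p + px u p * px (px u) p) * px u p + (px u p * px u p) * px (px u) p)) := Hxx.deriv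
  have Hxy := (((((((((hasDerivAt_const p.2.2 p.2.1).mul (sliceY hux p)).mul (sliceY hutx p)).sub (((hasDerivAt_const p.2.2 p.2.1).mul (sliceY huxx p)).mul (sliceY hut p))).sub ((hasDerivAt_const p.2.2 p.2.1).mul (sliceY hutt p))).sub (((sliceY hr₁ p).mul (sliceY huxx p)).const_mul (3:ℝ))).sub ((sliceY hr1t p).const_mul (3:ℝ))).add (((sliceY hu p).mul (sliceY hutx p)).const_mul (2:ℝ))).add (((sliceY hux p).mul (sliceY hux p)).mul (sliceY hux p)))
  have hvalxy : py (fun q => ((((((((q.2.1 * px u q) * px (pt u) q) - ((q.2.1 * px (px u) q) * pt u q)) - (q.2.1 * pt (pt u) q)) - (3 * (r₁ q * px (px u) q))) - (3 * pt r₁ q)) + (2 * (u q * px (pt u) q))) + ((px u q * px u q) * px u q))) p = ((((((((0 * px u p + p.2.1 * py (px u) p) * px (pt u) p + (p.2.1 * px u p) * py (px (pt u)) p) - ((0 * px (px u) p + p.2.1 * py (px (px u)) p) * pt u p + (p.2.1 * px (px u) p) * py (pt u) p)) - (0 * pt (pt u) p + p.2.1 * py (pt (pt u)) p)) - (3 *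 ((py (r₁) p * px (px u) p + r₁ p * py (px (px u)) p)))) - (3 * (py (pt r₁) p))) + (2 * ((py (u) p * px (pt u) p + u p * py (px (pt u)) p)))) + ((py (px u) p * px u p + px u p * py (px u) p) * px u p + (px u p * px u p) * py (px u) p)) := Hxy.deriv
  have Hty := (((((((((hasDerivAt_const p.1 p.2.1).mul (sliceT huy p)).mul (sliceT hutx p)).sub (((hasDerivAt_const p.1 p.2.1).mul (sliceT huxy p)).mul (sliceT hut p))).sub (((sliceT hr₁ p).mul (sliceT huxy p)).const_mul (3:ℝ))).sub ((((sliceT hu p).mul (sliceT huy p)).mul (sliceT huxx p)).const_mul (2:ℝ))).add ((((sliceT hu p).mul (sliceT hux p)).mul (sliceT huxy p)).const_mul (2:ℝ))).add (((sliceT huy p).mul (sliceT hux p)).mul (sliceT hux p))).sub (((sliceT huy p).mul (sliceT hut p)).const_mul (2:ℝ)))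
  have hvalty : pt (fun q => ((((((((q.2.1 * py u q) * px (pt u) q) - ((q.2.1 * py (px u) q) * pt u q)) - (3 * (r₁ q * py (px u) q))) - (2 * ((u q * py u q) * px (px u) q))) + (2 * ((u q * px u q) * py (px u) q))) + ((py u q * px u q) * px u q)) - (2 * (py u q * pt u q)))) p = ((((((((0 * py u p + p.2.1 * pt (py u) p) * px (pt u) p + (p.2.1 * py u p) * pt (px (pt u)) p) - ((0 * py (px u) p + p.2.1 * pt (py (px u)) p) * pt u p + (p.2.1 * py (px u) p) * pt (pt u) p)) - (3 * ((pt (r₁) p * py (px u) p + r₁ p * pt (py (px u)) p)))) - (2 * (((pt (u) p * py u p + u p * pt (py u) p) * px (px u) p + (u p * py u p) * pt (px (px u)) p)))) + (2 * (((pt (u) p * px u p + u p * pt (px u) p) * py (px u) p + (u p * px u p) * pt (py (px u)) p)))) + ((pt (py u) p * px u p + py u p * pt (px u) p) * px u p + (py u p * px u p) * pt (px u) p)) - (2 * ((pt (py u) p * pt u p + py u p * pt (pt u) p)))) := Hty.deriv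
  rw [hvalty, hvalxy, hvalxx]
  simp only [heq', hr₁x, hr₁y, hr₂x, hr₂y, Q1, Q2, Q3, Q4, C1f, pt_px_comm hu, pt_py_comm hu, px_py_comm hu, pt_px_comm hux, pt_py_comm hux, px_py_comm hux, pt_px_comm hut, ← px_py_comm hut]
  ring
end
end

section
/- Let a : ℕ × ℕ → ℤ satisfy a(2, i) = −(i + 2) for all i ≥ 1, and the recurrence a(k + 1, i) = (i + k + 1)·a(k, i) − (i + 1)·a(k, i + 1) for all k ≥ 2 and i ≥ 1. Then a(k, i) = −(k − 2)!·(k + i) for all k ≥ 2 and i ≥ 1. -/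
/-- the recurrence `a(k+1,i) = (i+k+1)·a(k,i) − (i+1)·a(k,i+1)`
with initial values `a(2,i) = −(i+2)` has solution `a(k,i) = −(k−2)!·(k+i)`. -/
theorem coefficient_a_formula (a : ℕ × ℕ → ℤ)
    (hbase : ∀ i : ℕ, 1 ≤ i → a (2, i) = -((i : ℤ) + 2))
    (hrec : ∀ k i : ℕ, 2 ≤ k → 1 ≤ i →
      a (k + 1, i) = ((i : ℤ) + k + 1) * a (k, i) - ((i : ℤ) + 1) * a (k, i + 1)) :
    ∀ k i : ℕ, 2 ≤ k → 1 ≤ i →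
      a (k, i) = -((Nat.factorial (k - 2) : ℤ)) * ((k : ℤ) + i) := by
  have key : ∀ m : ℕ, ∀ i : ℕ, 1 ≤ i →
      a (m + 2, i) = -((Nat.factorial m : ℤ)) * ((m : ℤ) + 2 + i) := by
    intro m
    induction m with
    | zero =>
      intro i hi
      rw [hbase i hi]; simp [Nat.factorial]; ring
      -- a(2,i) = -(i+2)
    | succ n ih =>
      intro i hi
      have h1 := hrec (n + 2) i (by omega) hi
      rw [ih i hi, ih (i + 1) (by omega)] at h1
      rw [show n + 1 + 2 = n + 2 + 1 from rfl, h1, Nat.factorial_succ]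
      push_cast
      ring
  intro k i hk hi
  obtain ⟨m, rfl⟩ : ∃ m, k = m + 2 := ⟨k - 2, by omega⟩
  simpa using key m i hi
end

section
/- Let R = ℚ[q₀, q₁, q₂, …] be the polynomial algebra in countably many variables and let X : R → R be the derivation determined by X(q_i) = (i + 1)·q_{i+1} for every i ≥ 0. Let φ₁ ∈ R be a polynomial in the single variable q₀, and define φ_i = (1/(i − 1))·X(φ_{i−1}) for i ≥ 2. Then for all i ≥ 2 and all j ≥ 1, the partial derivatives satisfy ∂φ_i/∂q_j = ∂φ_{i−1}/∂q_{j−1}. (In particular, the commutator identity [∂/∂q_j, X] = j·∂/∂q_{j−1} holds, and the φ_i are the components of the invisible symmetry Υ_k(B) of the positive covering of the 3D rdDym equation.) -/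
/-!
Write `∂ⱼ` for `pderiv j`. Both sides of `[∂ⱼ, X] = j • ∂ⱼ₋₁` are derivations agreeing on the
variables. Applied to `i • φᵢ₊₁ = X φᵢ` this gives `i • ∂ⱼ φᵢ₊₁ = X (∂ⱼ φᵢ) + j • ∂ⱼ₋₁ φᵢ`, and
`∂ⱼ₊₁ φᵢ₊₁ = ∂ⱼ φᵢ` follows by induction on `i`: the base case holds because `φ₁` only involves
`q₀`, and in the inductive step the relations for `φᵢ₊₂` and `φᵢ₊₁` differ exactly by the
induction hypothesis.
-/

open MvPolynomial

theorem MvPolynomial.pderiv_aeval_X_of_ne {R : Type*} [CommSemiring R] {j k : ℕ} (h : k ≠ j)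
    (P : Polynomial R) : pderiv j (Polynomial.aeval (X k : MvPolynomial ℕ R) P) = 0 := by
  rw [Derivation.comp_aeval_eq, pderiv_X_of_ne h, smul_zero]

section ShiftDerivation

variable {K : Type*} [Field K] {X : Derivation K (MvPolynomial ℕ K) (MvPolynomial ℕ K)}

theorem lie_pderiv_eq_smul_pderiv_pred
    (hX : ∀ i : ℕ, X (MvPolynomial.X i) = ((i : K) + 1) • MvPolynomial.X (i + 1)) (j : ℕ) :
    ⁅(pderiv j : Derivation K (MvPolynomial ℕ K) (MvPolynomial ℕ K)), X⁆ =
      (j : K) • pderiv (j - 1) := by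
  refine MvPolynomial.derivation_ext fun i => ?_
  simp only [Derivation.commutator_apply, Derivation.smul_apply, hX, Derivation.map_smul,
    pderiv_X, Pi.single_apply, apply_ite X, Derivation.map_one_eq_zero, map_zero, ite_self,
    sub_zero]
  rcases j with _ | j
  · simp
  · by_cases hij : i = j <;> simp [hij]

variable {φ : ℕ → MvPolynomial ℕ K}

theorem smul_pderiv_succ_eq [CharZero K]
    (hX : ∀ i : ℕ, X (MvPolynomial.X i) = ((i : K) + 1) • MvPolynomial.X (i + 1))
    (hrec : ∀ i : ℕ, 2 ≤ i → φ i = (1 / ((i : K) - 1)) • X (φ (i - 1)))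
    {i : ℕ} (hi : 1 ≤ i) (j : ℕ) :
    (i : K) • pderiv j (φ (i + 1)) = X (pderiv j (φ i)) + (j : K) • pderiv (j - 1) (φ i) := by
  have hφ : (i : K) • φ (i + 1) = X (φ i) := by
    rw [hrec (i + 1) (by omega), smul_smul]
    have : (i : K) ≠ 0 := by exact_mod_cast (by omega : i ≠ 0)
    simp [this]
  have hcomm := congrArg (· (φ i)) (lie_pderiv_eq_smul_pderiv_pred hX j)
  simp only [Derivation.commutator_apply, Derivation.smul_apply] at hcomm
  rw [← Derivation.map_smul, hφ, ← hcomm]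
  abel

theorem pderiv_succ_succ_eq [CharZero K]
    (hX : ∀ i : ℕ, X (MvPolynomial.X i) = ((i : K) + 1) • MvPolynomial.X (i + 1))
    (hφ1 : ∃ P : Polynomial K, φ 1 = Polynomial.aeval (MvPolynomial.X 0) P)
    (hrec : ∀ i : ℕ, 2 ≤ i → φ i = (1 / ((i : K) - 1)) • X (φ (i - 1)))
    {i : ℕ} (hi : 1 ≤ i) (j : ℕ) : pderiv (j + 1) (φ (i + 1)) = pderiv j (φ i) := by
  induction i, hi using Nat.le_induction generalizing j with
  | base =>
    obtain ⟨P, hP⟩ := hφ1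
    have hbase : ∀ k, pderiv (k + 1) (φ 1) = 0 := fun k => by
      rw [hP, pderiv_aeval_X_of_ne (by omega)]
    have h := smul_pderiv_succ_eq hX hrec le_rfl (j + 1)
    rw [hbase, map_zero, zero_add, Nat.add_sub_cancel, Nat.cast_one, one_smul] at h
    rcases j with _ | k
    · simpa using h
    · rw [h, hbase, smul_zero]
  | succ i hi ih =>
    have hshift : (j : K) • pderiv j (φ (i + 1)) = (j : K) • pderiv (j - 1) (φ i) := by
      rcases j with _ | k
      · simp
      · rw [ih, Nat.add_sub_cancel]
    have hnext := smul_pderiv_succ_eq hX hrec (by omega : 1 ≤ i + 1) (j + 1)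
    have hprev := smul_pderiv_succ_eq hX hrec hi j
    rw [ih, Nat.add_sub_cancel] at hnext
    have hi' : ((i + 1 : ℕ) : K) ≠ 0 := Nat.cast_ne_zero.mpr (by omega)
    refine smul_right_injective _ hi' ?_
    push_cast at hnext ⊢
    linear_combination (norm := module) hnext - hprev + hshift

end ShiftDerivation

/-- in the polynomial algebra `ℚ[q₀, q₁, q₂, …]`, for the
derivation `X` with `X(q_i) = (i+1)·q_{i+1}`, if `φ₁` is a polynomial in `q₀`
alone and `φ_i = (1/(i−1))·X(φ_{i−1})` for `i ≥ 2`, then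
`∂φ_i/∂q_j = ∂φ_{i−1}/∂q_{j−1}` for all `i ≥ 2`, `j ≥ 1`. -/
theorem invisible_symmetry_components
    (X : Derivation ℚ (MvPolynomial ℕ ℚ) (MvPolynomial ℕ ℚ))
    (hX : ∀ i : ℕ, X (MvPolynomial.X i) = ((i : ℚ) + 1) • MvPolynomial.X (i + 1))
    (φ : ℕ → MvPolynomial ℕ ℚ)
    (hφ1 : ∃ P : Polynomial ℚ, φ 1 = Polynomial.aeval (MvPolynomial.X 0) P)
    (hrec : ∀ i : ℕ, 2 ≤ i → φ i = (1 / ((i : ℚ) - 1)) • X (φ (i - 1))) :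
    ∀ i j : ℕ, 2 ≤ i → 1 ≤ j →
      MvPolynomial.pderiv j (φ i) = MvPolynomial.pderiv (j - 1) (φ (i - 1)) := by
  intro i j hi hj
  obtain ⟨i, rfl⟩ : ∃ i', i = i' + 1 := ⟨i - 1, by omega⟩
  obtain ⟨j, rfl⟩ : ∃ j', j = j' + 1 := ⟨j - 1, by omega⟩
  exact pderiv_succ_succ_eq hX hφ1 hrec (by omega) j
end

section
/- Let L be a Lie algebra over ℝ, let R be a commutative ℝ-algebra equipped with a derivation D, let Ψ : ℤ → L, and let Θ : ℤ → (R →ₗ L) be a family of ℝ-linear maps. Assume: (i) for all integers k ≥ 0, all l ∈ ℤ, and all A ∈ R, ⁅Ψ_k, Θ_l(A)⁆ = l·Θ_{k+l}(A); (ii) for all integers k ≥ −2 and all A ∈ R, Θ_k(A) = −(1/3)·⁅Ψ_{k+3}, Θ_{−3}(A)⁆; (iii) for all l ∈ ℤ and all A, Ã ∈ R, ⁅Θ_{−3}(A), Θ_l(Ã)⁆ = Θ_{l−3}(A·D(Ã) − D(A)·Ã). Then for all integers k ≥ −2, all l ∈ ℤ, and all A, Ã ∈ R, ⁅Θ_k(A),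 Θ_l(Ã)⁆ = Θ_{k+l}(A·D(Ã) − D(A)·Ã). -/
/-- the commutator relations
`{Θ_k(A), Θ_l(A')} = Θ_{k+l}(A·D(A') − D(A)·A')` extend from the case `k = −3`
to all `k ≥ −2` via the relations `⁅Ψ_k, Θ_l(A)⁆ = l·Θ_{k+l}(A)` and
`Θ_k(A) = −(1/3)·⁅Ψ_{k+3}, Θ_{−3}(A)⁆`. -/
theorem theta_bracket_relation
    (L : Type*) [LieRing L] [LieAlgebra ℝ L]
    (R : Type*) [CommRing R] [Algebra ℝ R]
    (D : Derivation ℝ R R)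
    (Ψ : ℤ → L) (Θ : ℤ → R →ₗ[ℝ] L)
    (h1 : ∀ k l : ℤ, 0 ≤ k → ∀ A : R, ⁅Ψ k, Θ l A⁆ = l • Θ (k + l) A)
    (h2 : ∀ k : ℤ, -2 ≤ k → ∀ A : R,
      Θ k A = -(1 / 3 : ℝ) • ⁅Ψ (k + 3), Θ (-3) A⁆)
    (h3 : ∀ l : ℤ, ∀ A A' : R,
      ⁅Θ (-3) A, Θ l A'⁆ = Θ (l - 3) (A * D A' - D A * A')) :
    ∀ k l : ℤ, -2 ≤ k → ∀ A A' : R,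
      ⁅Θ k A, Θ l A'⁆ = Θ (k + l) (A * D A' - D A * A') := by
  intro k l hk A A'
  have hk3 : (0:ℤ) ≤ k + 3 := by linarith
  have key : ⁅Ψ (k + 3), ⁅Θ (-3) A, Θ l A'⁆⁆
      = ⁅⁅Ψ (k + 3), Θ (-3) A⁆, Θ l A'⁆ + ⁅Θ (-3) A, ⁅Ψ (k + 3), Θ l A'⁆⁆ :=
    leibniz_lie _ _ _
  rw [h3, h1 _ _ hk3] at key
  rw [h1 (k+3) l hk3 A', lie_smul, h3] at key
  have hidx : k + 3 + (l - 3) = k + l := by ring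
  have hidx2 : k + 3 + l - 3 = k + l := by ring
  rw [hidx, hidx2] at key
  have hbr : ⁅⁅Ψ (k + 3), Θ (-3) A⁆, Θ l A'⁆
      = (-3 : ℤ) • Θ (k + l) (A * D A' - D A * A') := by
    have h := eq_sub_of_add_eq key.symm
    rw [h, ← sub_smul]
    norm_num
  rw [h2 k hk A, smul_lie, hbr, ← Int.cast_smul_eq_zsmul ℝ, smul_smul]
  norm_num
end

section
/- Let u, q₁ : ℝ³ → ℝ be smooth (C^∞) functions of (t,x,y) with u_y nowhere zero. Suppose q₁ satisfies the covering equations q₁,t = u_x/u_y and q₁,x = 1/u_y at every point. Then, with φ = x·u_x − 2u and φ₁ = q₁ + x·q₁,x, the following two identities hold at every point: (i) φ_y·q₁,x + u_y·(φ₁)_x = 0, and (ii) φ_y·q₁,t + u_y·(φ₁)_t = φ_x. (These are the defining equations showing that the scaling symmetry ψ₀ = x·u_x − 2u lifts to a nonlocal symmetry Ψ₀ of the positive covering with first component ψ₀¹ = q₁ + x·q₁,x.) -/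
noncomputable section

namespace SSL

variable {f : ℝ × ℝ × ℝ → ℝ}

lemma hd1 (hf : ContDiff ℝ (⊤ : ℕ∞) f) (p : ℝ × ℝ × ℝ) :
    HasDerivAt (fun s => f (s, p.2.1, p.2.2)) (fderiv ℝ f p ((1:ℝ),(0:ℝ),(0:ℝ))) p.1 := by
  have hl : HasDerivAt (fun s : ℝ => ((s, p.2.1, p.2.2) : ℝ × ℝ × ℝ)) (1, 0, 0) p.1 :=
    (hasDerivAt_id p.1).prodMk (hasDerivAt_const _ _)
  have hF : HasFDerivAt f (fderiv ℝ f p) (p.1, p.2.1, p.2.2) :=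
    (hf.differentiable (by simp) p).hasFDerivAt
  exact (hF.comp_hasDerivAt p.1 hl :)

lemma hd2 (hf : ContDiff ℝ (⊤ : ℕ∞) f) (p : ℝ × ℝ × ℝ) :
    HasDerivAt (fun s => f (p.1, s, p.2.2)) (fderiv ℝ f p ((0:ℝ),(1:ℝ),(0:ℝ))) p.2.1 := by
  have hl : HasDerivAt (fun s : ℝ => ((p.1, s, p.2.2) : ℝ × ℝ × ℝ)) (0, 1, 0) p.2.1 :=
    (hasDerivAt_const _ _).prodMk ((hasDerivAt_id _).prodMk (hasDerivAt_const _ _))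
  have hF : HasFDerivAt f (fderiv ℝ f p) (p.1, p.2.1, p.2.2) :=
    (hf.differentiable (by simp) p).hasFDerivAt
  exact (hF.comp_hasDerivAt p.2.1 hl :)

lemma hd3 (hf : ContDiff ℝ (⊤ : ℕ∞) f) (p : ℝ × ℝ × ℝ) :
    HasDerivAt (fun s => f (p.1, p.2.1, s)) (fderiv ℝ f p ((0:ℝ),(0:ℝ),(1:ℝ))) p.2.2 := by
  have hl : HasDerivAt (fun s : ℝ => ((p.1, p.2.1, s) : ℝ × ℝ × ℝ)) (0, 0, 1) p.2.2 :=
    (hasDerivAt_const _ _).prodMk ((hasDerivAt_const _ _).prodMk (hasDerivAt_id _))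
  have hF : HasFDerivAt f (fderiv ℝ f p) (p.1, p.2.1, p.2.2) :=
    (hf.differentiable (by simp) p).hasFDerivAt
  exact (hF.comp_hasDerivAt p.2.2 hl :)

lemma pt_eq (hf : ContDiff ℝ (⊤ : ℕ∞) f) (p : ℝ × ℝ × ℝ) :
    pt f p = fderiv ℝ f p ((1:ℝ),(0:ℝ),(0:ℝ)) := (hd1 hf p).deriv
lemma px_eq (hf : ContDiff ℝ (⊤ : ℕ∞) f) (p : ℝ × ℝ × ℝ) :
    px f p = fderiv ℝ f p ((0:ℝ),(1:ℝ),(0:ℝ)) := (hd2 hf p).deriv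
lemma py_eq (hf : ContDiff ℝ (⊤ : ℕ∞) f) (p : ℝ × ℝ × ℝ) :
    py f p = fderiv ℝ f p ((0:ℝ),(0:ℝ),(1:ℝ)) := (hd3 hf p).deriv

lemma hdT (hf : ContDiff ℝ (⊤ : ℕ∞) f) (p : ℝ × ℝ × ℝ) :
    HasDerivAt (fun s => f (s, p.2.1, p.2.2)) (pt f p) p.1 := by
  rw [pt_eq hf p]; exact hd1 hf p
lemma hdX (hf : ContDiff ℝ (⊤ : ℕ∞) f) (p : ℝ × ℝ × ℝ) :
    HasDerivAt (fun s => f (p.1, s, p.2.2)) (px f p) p.2.1 := by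
  rw [px_eq hf p]; exact hd2 hf p
lemma hdY (hf : ContDiff ℝ (⊤ : ℕ∞) f) (p : ℝ × ℝ × ℝ) :
    HasDerivAt (fun s => f (p.1, p.2.1, s)) (py f p) p.2.2 := by
  rw [py_eq hf p]; exact hd3 hf p

lemma smooth_dcomp (hf : ContDiff ℝ (⊤ : ℕ∞) f) (v : ℝ × ℝ × ℝ) :
    ContDiff ℝ (⊤ : ℕ∞) (fun q => fderiv ℝ f q v) :=
  (hf.fderiv_right (by simp)).clm_apply contDiff_const

lemma px_smooth (hf : ContDiff ℝ (⊤ : ℕ∞) f) : ContDiff ℝ (⊤ : ℕ∞) (px f) := by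
  have : px f = fun q => fderiv ℝ f q ((0:ℝ),(1:ℝ),(0:ℝ)) := funext fun q => px_eq hf q
  rw [this]; exact smooth_dcomp hf _

lemma py_smooth (hf : ContDiff ℝ (⊤ : ℕ∞) f) : ContDiff ℝ (⊤ : ℕ∞) (py f) := by
  have : py f = fun q => fderiv ℝ f q ((0:ℝ),(0:ℝ),(1:ℝ)) := funext fun q => py_eq hf q
  rw [this]; exact smooth_dcomp hf _

lemma pt_smooth (hf : ContDiff ℝ (⊤ : ℕ∞) f) : ContDiff ℝ (⊤ : ℕ∞) (pt f) := by
  have : pt f = fun q => fderiv ℝ f q ((1:ℝ),(0:ℝ),(0:ℝ)) := funext fun q => pt_eq hf q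
  rw [this]; exact smooth_dcomp hf _

lemma fderiv_dcomp (hf : ContDiff ℝ (⊤ : ℕ∞) f) (p v w : ℝ × ℝ × ℝ) :
    fderiv ℝ (fun q => fderiv ℝ f q v) p w = fderiv ℝ (fderiv ℝ f) p w v := by
  have hf'' : HasFDerivAt (fderiv ℝ f) (fderiv ℝ (fderiv ℝ f) p) p :=
    ((hf.fderiv_right (m := 1) (by exact WithTop.coe_le_coe.mpr le_top)).differentiable one_ne_zero p).hasFDerivAt
  have h := ((ContinuousLinearMap.apply ℝ ℝ v).hasFDerivAt.comp p hf'').fderiv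
  calc fderiv ℝ (fun q => fderiv ℝ f q v) p w
      = fderiv ℝ ((ContinuousLinearMap.apply ℝ ℝ v) ∘ (fderiv ℝ f)) p w := rfl
    _ = fderiv ℝ (fderiv ℝ f) p w v := by rw [h]; rfl

lemma clairaut (hf : ContDiff ℝ (⊤ : ℕ∞) f) (p v w : ℝ × ℝ × ℝ) :
    fderiv ℝ (fun q => fderiv ℝ f q v) p w = fderiv ℝ (fun q => fderiv ℝ f q w) p v := by
  rw [fderiv_dcomp hf p v w, fderiv_dcomp hf p w v]
  exact second_derivative_symmetric
    (fun q => (hf.differentiable (by simp) q).hasFDerivAt)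
    (((hf.fderiv_right (m := 1) (by exact WithTop.coe_le_coe.mpr le_top)).differentiable one_ne_zero p).hasFDerivAt) w v

lemma clairaut_tx (hf : ContDiff ℝ (⊤ : ℕ∞) f) (p : ℝ × ℝ × ℝ) :
    pt (px f) p = px (pt f) p := by
  have h2 : px f = fun q => fderiv ℝ f q ((0:ℝ),(1:ℝ),(0:ℝ)) := funext fun q => px_eq hf q
  have h1 : pt f = fun q => fderiv ℝ f q ((1:ℝ),(0:ℝ),(0:ℝ)) := funext fun q => pt_eq hf q
  rw [pt_eq (px_smooth hf) p, px_eq (pt_smooth hf) p, h1, h2]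
  exact clairaut hf p _ _

lemma clairaut_xy (hf : ContDiff ℝ (⊤ : ℕ∞) f) (p : ℝ × ℝ × ℝ) :
    px (py f) p = py (px f) p := by
  have h2 : px f = fun q => fderiv ℝ f q ((0:ℝ),(1:ℝ),(0:ℝ)) := funext fun q => px_eq hf q
  have h3 : py f = fun q => fderiv ℝ f q ((0:ℝ),(0:ℝ),(1:ℝ)) := funext fun q => py_eq hf q
  rw [px_eq (py_smooth hf) p, py_eq (px_smooth hf) p, h2, h3]
  exact clairaut hf p _ _

end SSL

open SSL in
/-- the scaling symmetry `φ = x·u_x − 2u` lifts to the positive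
covering with first component `φ₁ = q₁ + x·q₁,x`: the two defining identities
`φ_y·q₁,x + u_y·(φ₁)_x = 0` and `φ_y·q₁,t + u_y·(φ₁)_t = φ_x` hold. -/
theorem scaling_symmetry_lift (u q₁ : ℝ × ℝ × ℝ → ℝ)
    (hu : ContDiff ℝ (⊤ : ℕ∞) u) (hq : ContDiff ℝ (⊤ : ℕ∞) q₁)
    (huy : ∀ p, py u p ≠ 0)
    (hqt : ∀ p, pt q₁ p = px u p / py u p)
    (hqx : ∀ p, px q₁ p = 1 / py u p) :
    (∀ p, py (fun q => q.2.1 * px u q - 2 * u q) p * px q₁ p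
        + py u p * px (fun q => q₁ q + q.2.1 * px q₁ q) p = 0) ∧
    (∀ p, py (fun q => q.2.1 * px u q - 2 * u q) p * pt q₁ p
        + py u p * pt (fun q => q₁ q + q.2.1 * px q₁ q) p
      = px (fun q => q.2.1 * px u q - 2 * u q) p) := by
  have hpxq : px q₁ = fun p => (py u p)⁻¹ := by
    funext p; rw [hqx p, one_div]
  have hptq : pt q₁ = fun p => px u p / py u p := funext hqt
  -- φ_y = x·u_xy − 2·u_y
  have hφy : ∀ p : ℝ × ℝ × ℝ,
      py (fun q => q.2.1 * px u q - 2 * u q) p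
        = p.2.1 * py (px u) p - 2 * py u p := by
    rintro ⟨t, x, y⟩
    exact (((hdY (px_smooth hu) (t,x,y)).const_mul x).sub
      ((hdY hu (t,x,y)).const_mul 2)).deriv
  -- φ_x = u_x + x·u_xx − 2·u_x
  have hφx : ∀ p : ℝ × ℝ × ℝ,
      px (fun q => q.2.1 * px u q - 2 * u q) p
        = 1 * px u p + p.2.1 * px (px u) p - 2 * px u p := by
    rintro ⟨t, x, y⟩
    exact (((hasDerivAt_id x).mul (hdX (px_smooth hu) (t,x,y))).sub
      ((hdX hu (t,x,y)).const_mul 2)).deriv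
  -- q₁,xx = −u_xy/u_y²  (as: px (px q₁) p = −px (py u) p / (py u p)^2)
  have hqxx : ∀ p : ℝ × ℝ × ℝ,
      px (px q₁) p = -px (py u) p / (py u p) ^ 2 := by
    rintro ⟨t, x, y⟩
    rw [hpxq]
    exact ((hdX (py_smooth hu) (t,x,y)).inv (huy (t,x,y))).deriv
  -- q₁,tx via Clairaut:  pt (px q₁) = px (pt q₁) = px (u_x/u_y)
  have hqtx : ∀ p : ℝ × ℝ × ℝ,
      pt (px q₁) p
        = (px (px u) p * py u p - px u p * px (py u) p) / (py u p) ^ 2 := by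
    rintro ⟨t, x, y⟩
    rw [clairaut_tx hq (t,x,y), hptq]
    exact ((hdX (px_smooth hu) (t,x,y)).div (hdX (py_smooth hu) (t,x,y))
      (huy (t,x,y))).deriv
  -- (φ₁)_x = 2 q₁,x + x q₁,xx
  have hφ1x : ∀ p : ℝ × ℝ × ℝ,
      px (fun q => q₁ q + q.2.1 * px q₁ q) p
        = px q₁ p + (1 * px q₁ p + p.2.1 * px (px q₁) p) := by
    rintro ⟨t, x, y⟩
    exact ((hdX hq (t,x,y)).add
      ((hasDerivAt_id x).mul (hdX (px_smooth hq) (t,x,y)))).deriv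
  -- (φ₁)_t = q₁,t + x q₁,xt
  have hφ1t : ∀ p : ℝ × ℝ × ℝ,
      pt (fun q => q₁ q + q.2.1 * px q₁ q) p
        = pt q₁ p + p.2.1 * pt (px q₁) p := by
    rintro ⟨t, x, y⟩
    exact ((hdT hq (t,x,y)).add
      ((hdT (px_smooth hq) (t,x,y)).const_mul x)).deriv
  constructor
  · intro p
    rw [hφy p, hφ1x p, hqxx p, hqx p, clairaut_xy hu p]
    have h := huy p
    field_simp
    ring
  · intro p
    rw [hφy p, hφ1t p, hqtx p, hqt p, hφx p, clairaut_xy hu p]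
    have h := huy p
    field_simp
    ring
end
end
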